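/- arXiv:2405.15416 — 6 statements merged into one kernel-verified Lean document; each statement's English description precedes it below -/
import Mathlib

section
/- Every simple brick or brace other than K_2 and the 4-cycle C_4 is 3-connected. -/
open SimpleGraph

variable {V : Type*}

/-- A matching covered graph: a connected graph with at least two vertices in which
every edge belongs to some perfect matching. -/
def MatchingCovered (G : SimpleGraph V) : Prop :=
  G.Connected ∧ Nontrivial V ∧
    ∀ e ∈ G.edgeSet, ∃ M : G.Subgraph, M.IsPerfectMatching ∧ e ∈ M.edgeSet

/-- A cycle `C` is conformal if `G - V(C)` has a perfect matching. -/
def ConformalCycle (G : SimpleGraph V) {u : V} (C : G.Walk u u) : Prop :=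
  ∃ M : G.Subgraph, M.IsMatching ∧ M.verts = {w | w ∉ C.support}

/-- A matching covered graph is cycle-extendable if each of its even cycles is conformal. -/
def CycleExtendable (G : SimpleGraph V) : Prop :=
  ∀ ⦃u : V⦄ (C : G.Walk u u), C.IsCycle → Even C.length → ConformalCycle G C
/-- `X` determines a tight cut of `G`: `X` is a nonempty proper set of vertices and
every perfect matching of `G` has exactly one edge with one end in `X` and one end
outside `X`. -/
def IsTightCut (G : SimpleGraph V) (X : Set V) : Prop :=
  X.Nonempty ∧ X ≠ Set.univ ∧
    ∀ M : G.Subgraph, M.IsPerfectMatching →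
      ∃! p : V × V, p.1 ∈ X ∧ p.2 ∉ X ∧ M.Adj p.1 p.2

/-- `G` has a nontrivial tight cut: a tight cut both of whose shores have
at least two vertices. -/
def HasNontrivialTightCut (G : SimpleGraph V) : Prop :=
  ∃ X : Set V, IsTightCut G X ∧ 2 ≤ X.ncard ∧ 2 ≤ Xᶜ.ncard

/-- A brick: a nonbipartite matching covered graph with no nontrivial tight cut. -/
def IsBrick (G : SimpleGraph V) : Prop :=
  MatchingCovered G ∧ ¬ G.Colorable 2 ∧ ¬ HasNontrivialTightCut G

/-- A brace: a bipartite matching covered graph with no nontrivial tight cut. -/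
def IsBrace (G : SimpleGraph V) : Prop :=
  MatchingCovered G ∧ G.Colorable 2 ∧ ¬ HasNontrivialTightCut G

/-- `G` is 3-connected: it has at least four vertices and deleting any set of at most
two vertices leaves a connected graph. -/
def ThreeConnected (G : SimpleGraph V) [Fintype V] : Prop :=
  4 ≤ Fintype.card V ∧ ∀ S : Set V, S.ncard ≤ 2 → (G.induce Sᶜ).Connected


section AuxBrick

variable {G : SimpleGraph V}


private lemma even_card_invol [DecidableEq V] :
    ∀ s : Finset V, ∀ f : V → V, (∀ x ∈ s, f x ∈ s) → (∀ x ∈ s, f (f x) = x) →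
      (∀ x ∈ s, f x ≠ x) → Even s.card := by
  intro s
  induction s using Finset.strongInduction with
  | _ s ih =>
    intro f h1 h2 h3
    rcases s.eq_empty_or_nonempty with rfl | ⟨x, hx⟩
    · simp
    · have hfx : f x ∈ s := h1 x hx
      have hsub : ({x, f x} : Finset V) ⊆ s := by
        intro z hz
        simp only [Finset.mem_insert, Finset.mem_singleton] at hz
        rcases hz with rfl | rfl <;> assumption
      have hss : s \ {x, f x} ⊂ s :=
        Finset.sdiff_ssubset hsub ⟨x, by simp⟩
      have hrec : Even (s \ {x, f x}).card := by
        refine ih _ hss f ?_ ?_ ?_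
        · intro z hz
          simp only [Finset.mem_sdiff, Finset.mem_insert, Finset.mem_singleton, not_or] at hz ⊢
          obtain ⟨hzs, hz1, hz2⟩ := hz
          refine ⟨h1 z hzs, ?_, ?_⟩
          · intro h; exact hz2 (by rw [← h2 z hzs, h])
          · intro h
            have := congrArg f h
            rw [h2 z hzs, h2 x hx] at this
            exact hz1 this
        · intro z hz
          exact h2 z (Finset.mem_sdiff.mp hz).1
        · intro z hz
          exact h3 z (Finset.mem_sdiff.mp hz).1
      have hcard2 : ({x, f x} : Finset V).card = 2 := by
        rw [Finset.card_insert_of_notMem (Finset.notMem_singleton.mpr (Ne.symm (h3 x hx))),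
          Finset.card_singleton]
      have hd := Finset.card_sdiff_of_subset hsub
      have hle := Finset.card_le_card hsub
      rw [hcard2] at hd hle
      obtain ⟨k, hk⟩ := hrec
      exact ⟨k + 1, by omega⟩

private lemma cross_parity_set [Fintype V] (X : Set V) (f : V → V)
    (hinv : ∀ x, f (f x) = x) (hne : ∀ x, f x ≠ x) :
    {x ∈ X | f x ∉ X}.ncard % 2 = X.ncard % 2 := by
  classical
  have hsplit : (X.toFinset.filter fun x => f x ∈ X.toFinset).card
      + (X.toFinset.filter fun x => ¬ f x ∈ X.toFinset).card = X.toFinset.card :=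
    Finset.card_filter_add_card_filter_not _
  have heven : Even (X.toFinset.filter fun x => f x ∈ X.toFinset).card := by
    refine even_card_invol _ f ?_ (fun x _ => hinv x) (fun x _ => hne x)
    intro x hx
    simp only [Finset.mem_filter] at hx ⊢
    exact ⟨hx.2, by rw [hinv x]; exact hx.1⟩
  have h1 : {x ∈ X | f x ∉ X} = ↑(X.toFinset.filter fun x => ¬ f x ∈ X.toFinset) := by
    ext z
    simp [Set.mem_toFinset]
  rw [h1, Set.ncard_coe_finset, Set.ncard_eq_toFinset_card']
  obtain ⟨k, hk⟩ := heven
  omega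

private lemma pm_exists_fun {M : G.Subgraph} (hM : M.IsPerfectMatching) :
    ∃ f : V → V, (∀ v, M.Adj v (f v)) ∧ (∀ v, f (f v) = v) ∧ (∀ v, f v ≠ v) ∧
      (∀ v w, M.Adj v w → w = f v) := by
  have F := (Subgraph.isPerfectMatching_iff).mp hM
  refine ⟨fun v => (F v).choose, fun v => (F v).choose_spec.1, ?_, ?_, ?_⟩
  · intro v
    exact ((F _).choose_spec.2 v ((F v).choose_spec.1.symm)).symm
  · intro v
    exact fun h => (M.adj_sub (F v).choose_spec.1).ne' h
  · intro v w h
    exact (F v).choose_spec.2 w h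

private lemma isTightCut_of_small [Fintype V] (X : Set V)
    (hne : X.Nonempty) (hproper : X ≠ Set.univ) (hodd : X.ncard % 2 = 1)
    (hsmall : ∀ (M : G.Subgraph), M.IsPerfectMatching → ∀ f : V → V,
      (∀ v, M.Adj v (f v)) → (∀ v, f (f v) = v) →
      ∃ a b : V, {x ∈ X | f x ∉ X} ⊆ {a, b}) :
    IsTightCut G X := by
  refine ⟨hne, hproper, ?_⟩
  intro M hM
  obtain ⟨f, hadj, hinv, hfne, huniq⟩ := pm_exists_fun hM
  have hpar := cross_parity_set X f hinv hfne
  obtain ⟨a, b, hab⟩ := hsmall M hM f hadj hinv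
  have hle : {x ∈ X | f x ∉ X}.ncard ≤ 2 := by
    refine le_trans (Set.ncard_le_ncard hab (Set.toFinite _)) ?_
    refine le_trans (Set.ncard_insert_le a {b}) ?_
    simp
  have h1 : {x ∈ X | f x ∉ X}.ncard = 1 := by omega
  obtain ⟨c, hc⟩ := Set.ncard_eq_one.mp h1
  have hcmem : c ∈ X ∧ f c ∉ X := by
    have : c ∈ {x ∈ X | f x ∉ X} := hc ▸ Set.mem_singleton c
    exact this
  refine ⟨(c, f c), ⟨hcmem.1, hcmem.2, hadj c⟩, ?_⟩
  rintro ⟨p, q⟩ ⟨hp, hq, hpq⟩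
  have hqf : q = f p := huniq _ _ hpq
  have hpc : p ∈ {x ∈ X | f x ∉ X} := ⟨hp, hqf ▸ hq⟩
  rw [hc, Set.mem_singleton_iff] at hpc
  subst hpc
  simp [Prod.ext_iff, hqf]

private lemma exists_cross_edge (hconn : G.Connected) {A : Set V} (hA : A.Nonempty)
    (hAc : Aᶜ.Nonempty) : ∃ a b, a ∈ A ∧ b ∉ A ∧ G.Adj a b := by
  obtain ⟨a, ha⟩ := hA
  obtain ⟨b, hb⟩ := hAc
  obtain ⟨w⟩ := hconn.preconnected a b
  obtain ⟨d, _, h1, h2⟩ := w.exists_boundary_dart A ha hb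
  exact ⟨d.fst, d.snd, h1, h2, d.adj⟩

theorem brick_or_brace_threeConnected' {V : Type*} [Fintype V] (G : SimpleGraph V)
    (hbb : MatchingCovered G ∧ ¬ HasNontrivialTightCut G)
    (hK2 : IsEmpty (G ≃g (⊤ : SimpleGraph (Fin 2))))
    (hC4 : IsEmpty (G ≃g cycleGraph 4)) :
    ThreeConnected G := by
  classical
  obtain ⟨⟨hconn, hnontriv, hmc⟩, hNT⟩ := hbb
  -- there is an edge
  have hedge : ∃ a b, G.Adj a b := by
    obtain ⟨p, q, hpq⟩ := hnontriv
    obtain ⟨a, b, _, _, hab⟩ := exists_cross_edge hconn ⟨p, Set.mem_singleton p⟩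
      ⟨q, by simpa using hpq.symm⟩
    exact ⟨a, b, hab⟩
  -- there is a perfect matching; card V is even
  have heven : Even (Fintype.card V) := by
    obtain ⟨a, b, hab⟩ := hedge
    obtain ⟨M, hM, -⟩ := hmc s(a, b) (G.mem_edgeSet.mpr hab)
    exact hM.even_card
  -- card V ≠ 2
  have hcard2 : Fintype.card V ≠ 2 := by
    intro h2
    have hAdjNe : ∀ x y : V, G.Adj x y ↔ x ≠ y := by
      intro x y
      constructor
      · exact Adj.ne
      · intro hxy
        have huniv : ({x, y} : Finset V) = Finset.univ := by
          apply Finset.eq_univ_of_card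
          rw [Finset.card_insert_of_notMem (by simpa using hxy), Finset.card_singleton, h2]
        obtain ⟨a, b, ha, hb, hab⟩ := exists_cross_edge hconn
          ⟨x, Set.mem_singleton x⟩ ⟨y, by simpa using hxy.symm⟩
        rw [Set.mem_singleton_iff] at ha
        rw [ha] at hab
        have : b = x ∨ b = y := by
          have : b ∈ ({x, y} : Finset V) := huniv ▸ Finset.mem_univ b
          simpa using this
        rcases this with rfl | rfl
        · exact absurd rfl hab.ne
        · exact hab
    have e : V ≃ Fin 2 := Fintype.equivFinOfCardEq h2
    exact hK2.false ⟨e, by intro a b; simp [hAdjNe, e.injective.ne_iff]⟩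
  have hcard4 : 4 ≤ Fintype.card V := by
    have h2 : 2 ≤ Fintype.card V := Fintype.one_lt_card
    obtain ⟨k, hk⟩ := heven
    omega
  refine ⟨hcard4, ?_⟩
  intro S hS
  by_contra hdisc
  -- set up the disconnection
  have hSc : (Sᶜ).Nonempty := by
    rw [← Set.ncard_pos]
    have := Set.ncard_add_ncard_compl S
    rw [Nat.card_eq_fintype_card] at this
    omega
  have hnonem : Nonempty ↥(Sᶜ) := hSc.to_subtype
  have hpre : ¬ (G.induce Sᶜ).Preconnected := fun h => hdisc ⟨h⟩
  rw [SimpleGraph.Preconnected] at hpre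
  push_neg at hpre
  obtain ⟨x, y, hxy⟩ := hpre
  set A : Set V := {z | ∃ h : z ∈ Sᶜ, (G.induce Sᶜ).Reachable x ⟨z, h⟩} with hAdef
  set B : Set V := Sᶜ \ A with hBdef
  have hAS : A ⊆ Sᶜ := fun z hz => hz.1
  have hBS : B ⊆ Sᶜ := fun z hz => hz.1
  have hxA : (x : V) ∈ A := ⟨x.2, Reachable.refl x⟩
  have hyB : (y : V) ∈ B := by
    refine ⟨y.2, fun hy => hxy ?_⟩
    exact hy.2
  have hnoAB : ∀ a ∈ A, ∀ b ∈ B, ¬ G.Adj a b := by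
    rintro a ⟨haS, har⟩ b hb hadj
    refine hb.2 ⟨hb.1, har.trans (Adj.reachable ?_)⟩
    exact hadj
  have hAnbr : ∀ a ∈ A, ∀ z, G.Adj a z → z ∈ A ∨ z ∈ S := by
    intro a ha z hz
    by_cases hzS : z ∈ S
    · exact Or.inr hzS
    · left
      by_contra hzA
      exact hnoAB a ha z ⟨hzS, hzA⟩ hz
  have hBnbr : ∀ b ∈ B, ∀ z, G.Adj b z → z ∈ B ∨ z ∈ S := by
    intro b hb z hz
    by_cases hzS : z ∈ S
    · exact Or.inr hzS
    · left
      by_contra hzB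
      have hzA : z ∈ A := by
        by_contra h
        exact hzB ⟨hzS, h⟩
      exact hnoAB z hzA b hb hz.symm
  have hABdisj : ∀ z, z ∈ A → z ∈ B → False := fun z hA hB => hB.2 hA
  have hcardsum : B.ncard + A.ncard = (Sᶜ).ncard :=
    Set.ncard_diff_add_ncard_of_subset hAS
  have hSsum : S.ncard + (Sᶜ).ncard = Fintype.card V := by
    have := Set.ncard_add_ncard_compl S
    rwa [Nat.card_eq_fintype_card] at this
  have hAne : A.Nonempty := ⟨x, hxA⟩
  have hBne : B.Nonempty := ⟨y, hyB⟩
  have hApos : 1 ≤ A.ncard := hAne.ncard_pos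
  have hBpos : 1 ≤ B.ncard := hBne.ncard_pos
  have hScases : S.ncard = 0 ∨ S.ncard = 1 ∨ S.ncard = 2 := by omega
  rcases hScases with h0 | h1 | h2
  · -- S empty
    rw [Set.ncard_eq_zero] at h0
    subst h0
    obtain ⟨a, b, ha, hb, hab⟩ := exists_cross_edge hconn hAne ⟨y, fun h => hyB.2 h⟩
    have hbB : b ∈ B := ⟨by simp, hb⟩
    exact hnoAB a ha b hbB hab
  · -- S = {v}
    obtain ⟨v, hv⟩ := Set.ncard_eq_one.mp h1
    have key : ∀ C : Set V, C.Nonempty → C ⊆ Sᶜ →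
        (∀ c ∈ C, ∀ z, G.Adj c z → z ∈ C ∨ z = v) → C.ncard % 2 = 0 → False := by
      intro C hCne hCS hCnbr hCeven
      have hvC : v ∉ C := fun h => hCS h (by rw [hv]; exact rfl)
      obtain ⟨c0, z, hc0, hz, hadj0⟩ := exists_cross_edge hconn hCne ⟨v, hvC⟩
      have hzv : z = v := by
        rcases hCnbr c0 hc0 z hadj0 with h | h
        · exact absurd h hz
        · exact h
      rw [hzv] at hadj0
      obtain ⟨M, hM, hMe⟩ := hmc s(c0, v) (G.mem_edgeSet.mpr hadj0)
      have hMadj : M.Adj c0 v := (Subgraph.mem_edgeSet).mp hMe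
      obtain ⟨f, hadj, hinv, hfne, huniq⟩ := pm_exists_fun hM
      have hfc0 : f c0 = v := (huniq c0 v hMadj).symm
      have hcross : {x ∈ C | f x ∉ C} = {c0} := by
        ext w
        simp only [Set.mem_setOf_eq, Set.mem_singleton_iff]
        constructor
        · rintro ⟨hwC, hfw⟩
          rcases hCnbr w hwC (f w) (M.adj_sub (hadj w)) with h | h
          · exact absurd h hfw
          · have h2 : f w = f c0 := by rw [h, hfc0]
            have h3 := congrArg f h2
            rwa [hinv, hinv] at h3
        · rintro rfl
          exact ⟨hc0, by rw [hfc0]; exact hvC⟩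
      have hpar := cross_parity_set C f hinv hfne
      rw [hcross, Set.ncard_singleton] at hpar
      omega
    have hone : A.ncard % 2 = 0 ∨ B.ncard % 2 = 0 := by
      obtain ⟨k, hk⟩ := heven
      omega
    rcases hone with hpA | hpB
    · refine key A hAne hAS (fun c hc z hz => ?_) hpA
      rcases hAnbr c hc z hz with h | h
      · exact Or.inl h
      · exact Or.inr (by rw [hv] at h; exact h)
    · refine key B hBne hBS (fun c hc z hz => ?_) hpB
      rcases hBnbr c hc z hz with h | h
      · exact Or.inl h
      · exact Or.inr (by rw [hv] at h; exact h)
  · -- S = {u, v}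
    obtain ⟨u, v, huv, hS2⟩ := Set.ncard_eq_two.mp h2
    have huS : u ∈ S := by rw [hS2]; exact Set.mem_insert u {v}
    have hvS : v ∈ S := by rw [hS2]; exact Set.mem_insert_iff.mpr (Or.inr rfl)
    have huA : u ∉ A := fun h => hAS h huS
    have hvA : v ∉ A := fun h => hAS h hvS
    have huB : u ∉ B := fun h => hBS h huS
    have hvB : v ∉ B := fun h => hBS h hvS
    have hmemS : ∀ z ∈ S, z = u ∨ z = v := by
      intro z hz; rw [hS2] at hz; simpa using hz
    rcases Nat.even_or_odd A.ncard with hAe | hAo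
    · -- A even
      have hAe' : A.ncard % 2 = 0 := Nat.even_iff.mp hAe
      set X : Set V := insert u A with hXdef
      have hvX : v ∉ X := by
        intro h
        rcases Set.mem_insert_iff.mp h with h | h
        · exact huv h.symm
        · exact hvA h
      have hXcard : X.ncard = A.ncard + 1 := Set.ncard_insert_of_notMem huA (Set.toFinite A)
      have htight : IsTightCut G X := by
        refine isTightCut_of_small X ⟨u, Set.mem_insert u A⟩
          (fun h => hvX (by rw [h]; trivial)) (by omega) ?_
        intro M hM f hadj hinv
        refine ⟨f v, u, ?_⟩
        rintro w ⟨hwX, hfw⟩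
        rcases Set.mem_insert_iff.mp hwX with rfl | hwA
        · exact Set.mem_insert_iff.mpr (Or.inr rfl)
        · rcases hAnbr w hwA (f w) (M.adj_sub (hadj w)) with h | h
          · exact absurd (Set.mem_insert_iff.mpr (Or.inr h)) hfw
          · rcases hmemS _ h with h' | h'
            · exact absurd (h' ▸ Set.mem_insert u A) hfw
            · have hw : w = f v := by
                have h3 := congrArg f h'
                rwa [hinv] at h3
              exact Set.mem_insert_iff.mpr (Or.inl hw)
      have hXc2 : 2 ≤ Xᶜ.ncard := by
        have hsub : insert v B ⊆ Xᶜ := by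
          intro z hz
          rcases Set.mem_insert_iff.mp hz with rfl | hzB
          · exact hvX
          · intro hzX
            rcases Set.mem_insert_iff.mp hzX with rfl | hzA
            · exact huB hzB
            · exact hABdisj z hzA hzB
        have hBi : (insert v B).ncard = B.ncard + 1 := Set.ncard_insert_of_notMem hvB (Set.toFinite B)
        have hle := Set.ncard_le_ncard hsub (Set.toFinite _)
        omega
      exact hNT ⟨X, htight, by omega, hXc2⟩
    · -- A odd
      have hpar : A.ncard % 2 = 1 := Nat.odd_iff.mp hAo
      have hBpar : B.ncard % 2 = 1 := by
        obtain ⟨k, hk⟩ := heven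
        omega
      have key2 : ∀ C D : Set V, C ⊆ Sᶜ → D ⊆ Sᶜ → C.Nonempty → (∀ z ∈ D, z ∉ C) →
          2 ≤ D.ncard → C.ncard % 2 = 1 →
          (∀ c ∈ C, ∀ z, G.Adj c z → z ∈ C ∨ z ∈ S) → False := by
        intro C D hCS hDS hCne hDC hD2 hCodd hCnbr
        have huC : u ∉ C := fun h => hCS h huS
        have hvC : v ∉ C := fun h => hCS h hvS
        set X : Set V := insert u (insert v C) with hXdef
        have hXcard : X.ncard = C.ncard + 2 := by
          rw [Set.ncard_insert_of_notMem (by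
              intro h
              rcases Set.mem_insert_iff.mp h with h | h
              · exact huv h
              · exact huC h) (Set.toFinite _),
            Set.ncard_insert_of_notMem hvC (Set.toFinite _)]
        have hDX : ∀ z ∈ D, z ∉ X := by
          intro z hz hzX
          rcases Set.mem_insert_iff.mp hzX with rfl | h
          · exact (hDS hz) huS
          · rcases Set.mem_insert_iff.mp h with rfl | h
            · exact (hDS hz) hvS
            · exact hDC z hz h
        obtain ⟨d0, hd0⟩ : D.Nonempty := by
          rw [← Set.ncard_pos]; omega
        have htight : IsTightCut G X := by
          refine isTightCut_of_small X ⟨u, Set.mem_insert _ _⟩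
            (fun h => (hDX d0 hd0) (by rw [h]; trivial)) (by omega) ?_
          intro M hM f hadj hinv
          refine ⟨u, v, ?_⟩
          rintro w ⟨hwX, hfw⟩
          rcases Set.mem_insert_iff.mp hwX with rfl | h
          · exact Set.mem_insert _ _
          · rcases Set.mem_insert_iff.mp h with rfl | hwC
            · exact Set.mem_insert_iff.mpr (Or.inr rfl)
            · exfalso
              rcases hCnbr w hwC (f w) (M.adj_sub (hadj w)) with h' | h'
              · exact hfw (Set.mem_insert_iff.mpr (Or.inr (Set.mem_insert_iff.mpr (Or.inr h'))))
              · rcases hmemS _ h' with h'' | h''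
                · exact hfw (h'' ▸ Set.mem_insert _ _)
                · exact hfw (by rw [h'']; exact Set.mem_insert_iff.mpr (Or.inr (Set.mem_insert _ _)))
        refine hNT ⟨X, htight, by omega, ?_⟩
        have hsub : D ⊆ Xᶜ := fun z hz => hDX z hz
        have hle := Set.ncard_le_ncard hsub (Set.toFinite _)
        omega
      by_cases hB2 : 2 ≤ B.ncard
      · exact key2 A B hAS hBS hAne (fun z hz h => hABdisj z h hz) hB2 hpar hAnbr
      · by_cases hA2 : 2 ≤ A.ncard
        · exact key2 B A hBS hAS hBne (fun z hz h => hABdisj z hz h) hA2 hBpar hBnbr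
        · -- |A| = |B| = 1 : G must be C4
          have hA1 : A.ncard = 1 := by omega
          have hB1 : B.ncard = 1 := by omega
          obtain ⟨a, ha⟩ := Set.ncard_eq_one.mp hA1
          obtain ⟨b, hb⟩ := Set.ncard_eq_one.mp hB1
          have haA : a ∈ A := by rw [ha]; exact rfl
          have hbB : b ∈ B := by rw [hb]; exact rfl
          have hab : a ≠ b := fun h => hABdisj a haA (h ▸ hbB)
          have hau : a ≠ u := fun h => huA (h ▸ haA)
          have hav : a ≠ v := fun h => hvA (h ▸ haA)
          have hbu : b ≠ u := fun h => huB (h ▸ hbB)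
          have hbv : b ≠ v := fun h => hvB (h ▸ hbB)
          have cover : ∀ z : V, z = a ∨ z = u ∨ z = b ∨ z = v := by
            intro z
            by_cases hzS : z ∈ S
            · rcases hmemS z hzS with h | h
              · exact Or.inr (Or.inl h)
              · exact Or.inr (Or.inr (Or.inr h))
            · by_cases hzA : z ∈ A
              · rw [ha] at hzA
                exact Or.inl hzA
              · have hzB : z ∈ B := ⟨hzS, hzA⟩
                rw [hb] at hzB
                exact Or.inr (Or.inr (Or.inl hzB))
          have hnab : ¬G.Adj a b := fun h => hnoAB a haA b hbB h
          have nbra : ∀ z, G.Adj a z → z = u ∨ z = v := by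
            intro z hz
            rcases hAnbr a haA z hz with h | h
            · exfalso
              rw [ha, Set.mem_singleton_iff] at h
              exact hz.ne h.symm
            · exact hmemS z h
          have nbrb : ∀ z, G.Adj b z → z = u ∨ z = v := by
            intro z hz
            rcases hBnbr b hbB z hz with h | h
            · exfalso
              rw [hb, Set.mem_singleton_iff] at h
              exact hz.ne h.symm
            · exact hmemS z h
          have hnuv : ¬G.Adj u v := by
            intro h
            obtain ⟨M, hM, hMe⟩ := hmc s(u, v) (G.mem_edgeSet.mpr h)
            have hMadj : M.Adj u v := Subgraph.mem_edgeSet.mp hMe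
            obtain ⟨f, hadjf, hinvf, hfne, huniq⟩ := pm_exists_fun hM
            have hfu : f u = v := (huniq u v hMadj).symm
            rcases nbra (f a) (M.adj_sub (hadjf a)) with h' | h'
            · have h3 : a = f u := by
                have h4 := congrArg f h'
                rwa [hinvf] at h4
              rw [hfu] at h3
              exact hav h3
            · have h3 : a = f v := by
                have h4 := congrArg f h'
                rwa [hinvf] at h4
              have hfv : f v = u := by rw [← hfu, hinvf]
              rw [hfv] at h3
              exact hau h3
          have key4 : ∀ a' b' u' v' : V, (∀ z : V, z = a' ∨ z = u' ∨ z = b' ∨ z = v') →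
              a' ≠ b' → a' ≠ u' → a' ≠ v' → b' ≠ u' → b' ≠ v' → u' ≠ v' →
              ¬G.Adj a' b' → ¬G.Adj u' v' →
              (∀ z, G.Adj a' z → z = u' ∨ z = v') →
              (∀ z, G.Adj b' z → z = u' ∨ z = v') → G.Adj a' u' := by
            intro a' b' u' v' cov h1 h2 h3 h4 h5 h6 hn1 hn2 na nb
            by_contra hnau
            have hav' : G.Adj a' v' := by
              obtain ⟨p, q, hp, hq, hpq⟩ := exists_cross_edge hconn (A := {a'})
                ⟨a', rfl⟩ ⟨u', fun hh => h2 (Set.mem_singleton_iff.mp hh).symm⟩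
              rw [Set.mem_singleton_iff] at hp
              rw [hp] at hpq
              rcases na q hpq with rfl | rfl
              · exact absurd hpq hnau
              · exact hpq
            have hnbv : ¬G.Adj b' v' := by
              intro hbv'
              obtain ⟨M, hM, hMe⟩ := hmc s(b', v') (G.mem_edgeSet.mpr hbv')
              have hMadj : M.Adj b' v' := Subgraph.mem_edgeSet.mp hMe
              obtain ⟨f, hadjf, hinvf, hfne, huniq⟩ := pm_exists_fun hM
              have hfb : f b' = v' := (huniq _ _ hMadj).symm
              rcases na (f a') (M.adj_sub (hadjf a')) with h' | h'
              · exact hnau (h' ▸ M.adj_sub (hadjf a'))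
              · have hfv : f v' = b' := by rw [← hfb, hinvf]
                have h3 : a' = f v' := by
                  have h4 := congrArg f h'
                  rwa [hinvf] at h4
                rw [hfv] at h3
                exact h1 h3
            obtain ⟨p, q, hp, hq, hpq⟩ := exists_cross_edge hconn (A := {a', v'})
              ⟨a', Set.mem_insert _ _⟩ ⟨b', by
                intro hh
                rcases Set.mem_insert_iff.mp hh with hh | hh
                · exact h1 hh.symm
                · exact h5 (Set.mem_singleton_iff.mp hh)⟩
            rcases Set.mem_insert_iff.mp hp with rfl | hp'
            · rcases na q hpq with rfl | rfl
              · exact hnau hpq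
              · exact hq (Set.mem_insert_iff.mpr (Or.inr rfl))
            · rw [Set.mem_singleton_iff] at hp'
              subst hp'
              rcases cov q with rfl | rfl | rfl | rfl
              · exact hq (Set.mem_insert _ _)
              · exact hn2 hpq.symm
              · exact hnbv hpq.symm
              · exact hq (Set.mem_insert_iff.mpr (Or.inr rfl))
          have cov2 : ∀ z : V, z = a ∨ z = v ∨ z = b ∨ z = u := by
            intro z
            rcases cover z with h | h | h | h
            exacts [Or.inl h, Or.inr (Or.inr (Or.inr h)), Or.inr (Or.inr (Or.inl h)),
              Or.inr (Or.inl h)]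
          have cov3 : ∀ z : V, z = b ∨ z = u ∨ z = a ∨ z = v := by
            intro z
            rcases cover z with h | h | h | h
            exacts [Or.inr (Or.inr (Or.inl h)), Or.inr (Or.inl h), Or.inl h,
              Or.inr (Or.inr (Or.inr h))]
          have cov4 : ∀ z : V, z = b ∨ z = v ∨ z = a ∨ z = u := by
            intro z
            rcases cover z with h | h | h | h
            exacts [Or.inr (Or.inr (Or.inl h)), Or.inr (Or.inr (Or.inr h)), Or.inl h,
              Or.inr (Or.inl h)]
          have hadjau : G.Adj a u :=
            key4 a b u v cover hab hau hav hbu hbv huv hnab hnuv nbra nbrb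
          have hadjav : G.Adj a v :=
            key4 a b v u cov2 hab hav hau hbv hbu (Ne.symm huv) hnab
              (fun h => hnuv h.symm) (fun z hz => (nbra z hz).symm) (fun z hz => (nbrb z hz).symm)
          have hadjbu : G.Adj b u :=
            key4 b a u v cov3 (Ne.symm hab) hbu hbv hau hav huv (fun h => hnab h.symm) hnuv
              nbrb nbra
          have hadjbv : G.Adj b v :=
            key4 b a v u cov4 (Ne.symm hab) hbv hbu hav hau (Ne.symm huv)
              (fun h => hnab h.symm) (fun h => hnuv h.symm)
              (fun z hz => (nbrb z hz).symm) (fun z hz => (nbra z hz).symm)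
          set g : V → Fin 4 := fun z => if z = a then 0 else if z = u then 1 else
            if z = b then 2 else 3 with hg
          have hga : g a = 0 := by simp [hg]
          have hgu : g u = 1 := by simp [hg, Ne.symm hau]
          have hgb : g b = 2 := by simp [hg, Ne.symm hab, hbu]
          have hgv : g v = 3 := by simp [hg, Ne.symm hav, Ne.symm huv, Ne.symm hbv]
          have hbij : Function.Bijective g := by
            constructor
            · intro z w hzw
              rcases cover z with rfl | rfl | rfl | rfl <;>
                rcases cover w with rfl | rfl | rfl | rfl <;>
                simp only [hga, hgu, hgb, hgv] at hzw <;>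
                first
                  | rfl
                  | exact absurd hzw (by decide)
            · intro i
              fin_cases i
              · exact ⟨a, hga⟩
              · exact ⟨u, hgu⟩
              · exact ⟨b, hgb⟩
              · exact ⟨v, hgv⟩
          refine hC4.false ⟨Equiv.ofBijective g hbij, ?_⟩
          intro z w
          show (cycleGraph 4).Adj (g z) (g w) ↔ G.Adj z w
          rcases cover z with rfl | rfl | rfl | rfl <;>
            rcases cover w with rfl | rfl | rfl | rfl <;>
            simp only [hga, hgu, hgb, hgv] <;>
            first
              | exact iff_of_false (by decide) G.irrefl
              | exact iff_of_true (by decide) hadjau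
              | exact iff_of_true (by decide) hadjau.symm
              | exact iff_of_true (by decide) hadjav
              | exact iff_of_true (by decide) hadjav.symm
              | exact iff_of_true (by decide) hadjbu
              | exact iff_of_true (by decide) hadjbu.symm
              | exact iff_of_true (by decide) hadjbv
              | exact iff_of_true (by decide) hadjbv.symm
              | exact iff_of_false (by decide) hnab
              | exact iff_of_false (by decide) (fun hh => hnab hh.symm)
              | exact iff_of_false (by decide) hnuv
              | exact iff_of_false (by decide) (fun hh => hnuv hh.symm)

end AuxBrick

/-- Every simple brick or brace other than `K₂` and the 4-cycle `C₄`
is 3-connected. -/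
theorem brick_or_brace_threeConnected [Fintype V] (G : SimpleGraph V)
    (hbb : IsBrick G ∨ IsBrace G)
    (hK2 : IsEmpty (G ≃g (⊤ : SimpleGraph (Fin 2))))
    (hC4 : IsEmpty (G ≃g cycleGraph 4)) :
    ThreeConnected G := by
  rcases hbb with ⟨h1, _, h3⟩ | ⟨h1, _, h3⟩ <;>
    exact brick_or_brace_threeConnected' G ⟨h1, h3⟩ hK2 hC4
end

section
/- Let G be a matching covered graph and let ∂(X) be a nontrivial tight cut of G. If G is cycle-extendable, then both ∂(X)-contractions G/X and G/X̄ are cycle-extendable. -/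
open SimpleGraph

/-- A multigraph on the ambient vertex type `V`: a set of vertices together with a
symmetric, loopless edge-multiplicity function supported inside the vertex set.
(Multiple edges are recorded by multiplicities.) -/
structure MG (V : Type*) where
  verts : Set V
  mult : V → V → ℕ
  symm : ∀ u v, mult u v = mult v u
  loopless : ∀ v, mult v v = 0
  support : ∀ u v, 0 < mult u v → u ∈ verts ∧ v ∈ verts

/-- The underlying simple graph of a multigraph. -/
def MG.toSimple {V : Type*} (G : MG V) : SimpleGraph V where
  Adj u v := 0 < G.mult u v
  symm := ⟨by intro u v h; rwa [G.symm v u]⟩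
  loopless := ⟨by intro v h; rw [G.loopless v] at h; exact Nat.lt_irrefl 0 h⟩

/-- The degree of a vertex in a multigraph (counting multiplicities). -/
def MG.degree {V : Type*} [Fintype V] (G : MG V) (x : V) : ℕ := ∑ v, G.mult x v

/-- A perfect matching of a multigraph: a matching of the underlying simple graph
covering exactly the vertex set. -/
def MG.IsPM {V : Type*} (G : MG V) (M : G.toSimple.Subgraph) : Prop :=
  M.IsMatching ∧ M.verts = G.verts

/-- A matching covered multigraph: it has at least two vertices, is connected, and
every edge lies in some perfect matching. -/
def MG.MatchingCovered {V : Type*} (G : MG V) : Prop :=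
  G.verts.Nontrivial ∧
  (∀ u ∈ G.verts, ∀ v ∈ G.verts, Relation.ReflTransGen (fun a b => 0 < G.mult a b) u v) ∧
  (∀ u v : V, 0 < G.mult u v →
    ∃ M : G.toSimple.Subgraph, G.IsPM M ∧ M.Adj u v)

/-- A matching covered multigraph is cycle-extendable if every even cycle is conformal,
i.e. deleting its vertices leaves a matchable graph.  The even cycles of a multigraph
are the even cycles of the underlying simple graph together with the cycles of length
two formed by a pair of parallel edges. -/
def MG.CycleExtendable {V : Type*} (G : MG V) : Prop :=
  (∀ (u : V) (C : G.toSimple.Walk u u), C.IsCycle → Even C.length →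
    ∃ M : G.toSimple.Subgraph, M.IsMatching ∧ M.verts = G.verts \ {w | w ∈ C.support}) ∧
  (∀ u v : V, 2 ≤ G.mult u v →
    ∃ M : G.toSimple.Subgraph, M.IsMatching ∧ M.verts = G.verts \ {u, v})

open scoped Classical

/-- `X` determines a tight cut of the matching covered multigraph `G`: `X` is a
nonempty proper subset of the vertex set and every perfect matching contains exactly
one edge with one end in `X` and one end outside `X`. -/
def MG.IsTightCut {V : Type*} (G : MG V) (X : Set V) : Prop :=
  X ⊆ G.verts ∧ X.Nonempty ∧ X ≠ G.verts ∧
    ∀ M : G.toSimple.Subgraph, G.IsPM M →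
      ∃! p : V × V, p.1 ∈ X ∧ p.2 ∈ G.verts \ X ∧ M.Adj p.1 p.2

/-- A tight cut `∂(X)` is nontrivial if both shores have at least two vertices. -/
def MG.IsNontrivialCut {V : Type*} (G : MG V) (X : Set V) : Prop :=
  2 ≤ X.ncard ∧ 2 ≤ (G.verts \ X).ncard

/-- `H` is the `∂(X)`-contraction `G/X` of `G`, with the shore `X` shrunk to the single
contraction vertex `x`: multiplicities outside `X` are unchanged, and the multiplicity
between a vertex `u ∉ X` and `x` is the total multiplicity between `u` and `X`. -/
def MG.ContractionOf {V : Type*} [Fintype V] (G : MG V) (X : Set V) (x : V) (H : MG V) :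
    Prop :=
  x ∈ X ∧
  H.verts = (G.verts \ X) ∪ {x} ∧
  (∀ u v : V, u ∉ X → v ∉ X → H.mult u v = G.mult u v) ∧
  (∀ u : V, u ∉ X → H.mult u x = ∑ w ∈ Finset.univ.filter (· ∈ X), G.mult u w)

/-!
A perfect matching of `G` made of a perfect matching of an even cycle `C'` of `G` and one of
`G - V(C')` uses exactly one edge of the tight cut `∂(X)`, so shrinking `X` turns its part
outside `C'` into a perfect matching of `G/X` minus the image of `C'`. An even cycle of `G/X`
avoiding the contraction vertex `x` is a cycle of `G`. One through `x` enters `X` along edges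
`bw₁` and `vw₂` of `G`; it lifts to an even cycle of `G` by joining `w₁` to `w₂` with an even
path inside `X`, found by alternating between perfect matchings containing `bw₁` and `vw₂`:
by tightness neither of them leaves `X` anywhere else. Pairs of parallel edges are the even
cycles of length two and are treated alike, and `G/X̄` is the same statement for `∂(X̄)`.
-/

theorem Finset.exists_two_le_or_exists_ne_of_two_le_sum {ι : Type*} {s : Finset ι} {f : ι → ℕ}
    (h : 2 ≤ ∑ i ∈ s, f i) :
    (∃ i ∈ s, 2 ≤ f i) ∨ ∃ i ∈ s, ∃ j ∈ s, i ≠ j ∧ 0 < f i ∧ 0 < f j := by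
  by_contra! hcon
  obtain ⟨hle, hzero⟩ := hcon
  obtain ⟨i, hi, hpos⟩ := Finset.sum_pos_iff.mp (by omega : 0 < ∑ i ∈ s, f i)
  rw [Finset.sum_eq_single_of_mem i hi fun j hj hji => by
    have := hzero i hi j hj hji.symm hpos; omega] at h
  have := hle i hi
  omega

namespace SimpleGraph

variable {V : Type*} {Γ Γ' : SimpleGraph V}

def HasPerfectMatchingOn (Γ : SimpleGraph V) (U : Set V) : Prop :=
  ∃ M : Γ.Subgraph, M.IsMatching ∧ M.verts = U

theorem Adj.hasPerfectMatchingOn {u v : V} (h : Γ.Adj u v) : Γ.HasPerfectMatchingOn {u, v} :=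
  ⟨_, .subgraphOfAdj h, Γ.subgraphOfAdj_verts h⟩

theorem HasPerfectMatchingOn.union {U W : Set V} (hU : Γ.HasPerfectMatchingOn U)
    (hW : Γ.HasPerfectMatchingOn W) (hUW : Disjoint U W) : Γ.HasPerfectMatchingOn (U ∪ W) := by
  obtain ⟨M, hM, rfl⟩ := hU
  obtain ⟨M', hM', rfl⟩ := hW
  exact ⟨M ⊔ M', hM.sup hM' (by rwa [hM.support_eq_verts, hM'.support_eq_verts]), rfl⟩

theorem Subgraph.IsMatching.hasPerfectMatchingOn {M : Γ.Subgraph} (hM : M.IsMatching)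
    {U : Set V} (hU : U ⊆ M.verts) (hclosed : ∀ ⦃p q⦄, M.Adj p q → p ∈ U → q ∈ U)
    (hadj : ∀ ⦃p q⦄, M.Adj p q → p ∈ U → Γ'.Adj p q) : Γ'.HasPerfectMatchingOn U := by
  refine ⟨{ verts := U
            Adj := fun p q => M.Adj p q ∧ p ∈ U
            adj_sub := fun h => hadj h.1 h.2
            edge_vert := fun h => h.2
            symm := ⟨fun p q h => ⟨h.1.symm, hclosed h.1 h.2⟩⟩ }, fun p hp => ?_, rfl⟩
  obtain ⟨q, hpq, hq⟩ := hM (hU hp)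
  exact ⟨q, ⟨hpq, hp⟩, fun r hr => hq r hr.1⟩

namespace Subgraph

def LeavesOnlyAt (M : Γ.Subgraph) (S : Set V) (w : V) : Prop :=
  ∀ ⦃p q⦄, M.Adj p q → p ∈ S → (q ∉ S ↔ p = w)

variable {M : Γ.Subgraph} {S : Set V} {w : V}

theorem LeavesOnlyAt.sdiff_pair (h : M.LeavesOnlyAt S w) (hM : M.IsMatching) {a c : V}
    (hac : M.Adj a c) : M.LeavesOnlyAt (S \ {a, c}) w := by
  rintro p q hpq ⟨hpS, hp⟩
  refine ⟨fun hq => ?_, fun hpw hq => (h hpq hpS).mpr hpw hq.1⟩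
  by_cases hqS : q ∈ S
  · rcases not_not.mp fun h => hq ⟨hqS, h⟩ with rfl | rfl
    · exact absurd (Or.inr (hM.eq_of_adj_right hpq hac.symm)) hp
    · exact absurd (Or.inl (hM.eq_of_adj_right hpq hac)) hp
  · exact (h hpq hpS).mp hqS

theorem LeavesOnlyAt.sdiff_pair_of_adj (h : M.LeavesOnlyAt S w) (hM : M.IsMatching) (hw : w ∈ S)
    {y z : V} (hyz : M.Adj y z) : M.LeavesOnlyAt (S \ {w, y}) z := by
  rintro p q hpq ⟨hpS, hp⟩
  refine ⟨fun hq => ?_, ?_⟩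
  · by_cases hqS : q ∈ S
    · rcases not_not.mp fun h => hq ⟨hqS, h⟩ with rfl | rfl
      · exact absurd hpS ((h hpq.symm hw).mpr rfl)
      · exact hM.eq_of_adj_right hpq hyz.symm
    · exact absurd ((h hpq hpS).mp hqS) fun h => hp (Or.inl h)
  · rintro rfl
    rw [hM.eq_of_adj_left hpq hyz.symm]
    exact fun h => h.2 (Or.inr rfl)

theorem IsMatching.exists_even_isPath [Finite V] {M₁ M₂ : Γ.Subgraph}
    (hM₁ : M₁.IsMatching) (hM₂ : M₂.IsMatching) {S : Set V} (hS₁ : S ⊆ M₁.verts)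
    (hS₂ : S ⊆ M₂.verts) {w₁ w₂ : V} (hw₁ : w₁ ∈ S) (hw₂ : w₂ ∈ S)
    (h₁ : M₁.LeavesOnlyAt S w₁) (h₂ : M₂.LeavesOnlyAt S w₂) :
    ∃ Q : Γ.Walk w₁ w₂, Q.IsPath ∧ Even Q.length ∧ ∀ z ∈ Q.support, z ∈ S := by
  obtain ⟨n, hn⟩ : ∃ n, S.ncard = n := ⟨_, rfl⟩
  induction n using Nat.strong_induction_on generalizing S w₁ with
  | _ n ih =>
    by_cases h₁₂ : w₁ = w₂
    · subst h₁₂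
      exact ⟨.nil, .nil, .zero, by simpa using hw₁⟩
    -- Walk `w₁ → y` along `M₂` and `y → z` along `M₁`, then recurse on `S \ {w₁, y}` from `z`.
    obtain ⟨y, hy, -⟩ := hM₂ (hS₂ hw₁)
    have hyS : y ∈ S := by_contra fun hyS => h₁₂ ((h₂ hy hw₁).mp hyS)
    obtain ⟨z, hz, -⟩ := hM₁ (hS₁ hyS)
    have hyw₁ : y ≠ w₁ := hy.ne.symm
    have hzS' : z ∈ S \ {w₁, y} := by
      refine ⟨by_contra fun hzS => hyw₁ ((h₁ hz hyS).mp hzS), ?_⟩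
      rintro (rfl | rfl)
      · exact (h₁ hz.symm hw₁).mpr rfl hyS
      · exact hz.ne rfl
    have hw₂S' : w₂ ∈ S \ {w₁, y} := by
      refine ⟨hw₂, ?_⟩
      rintro (h | rfl)
      · exact h₁₂ h.symm
      · exact (h₂ hy.symm hw₂).mpr rfl hw₁
    have hlt : (S \ {w₁, y}).ncard < n :=
      hn ▸ Set.ncard_lt_ncard ⟨Set.sdiff_subset, fun h => (h hw₁).2 (Or.inl rfl)⟩ S.toFinite
    obtain ⟨Q, hQ, hQe, hQS⟩ := ih _ hlt (Set.sdiff_subset.trans hS₁)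
      (Set.sdiff_subset.trans hS₂) hzS' hw₂S' (h₁.sdiff_pair_of_adj hM₁ hw₁ hz)
      (h₂.sdiff_pair hM₂ hy) rfl
    refine ⟨.cons hy.adj_sub (.cons hz.adj_sub Q), ?_, hQe.add even_two, ?_⟩
    · have hyQ : y ∉ Q.support := fun h => (hQS y h).2 (Or.inr rfl)
      have hw₁Q : w₁ ∉ Q.support := fun h => (hQS w₁ h).2 (Or.inl rfl)
      simp [hQ, hyQ, hw₁Q, hyw₁.symm]
    · simp only [Walk.support_cons, List.mem_cons]
      rintro v (rfl | rfl | hv)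
      exacts [hw₁, hyS, (hQS v hv).1]

end Subgraph

namespace Walk

theorem IsPath.exists_isMatching_support_cons :
    ∀ {a b c : V} {h : Γ.Adj a b} {p : Γ.Walk b c}, (cons h p).IsPath → Even p.length →
      ∃ M : Γ.Subgraph, M.IsMatching ∧ M.verts = {z | z ∈ (cons h p).support} ∧ M.Adj a b
  | _, _, _, h, .nil, _, _ =>
    ⟨_, .subgraphOfAdj h, by ext; simp, subgraphOfAdj_adj_self h⟩
  | _, _, _, _, .cons _ .nil, _, he => by simp at he
  | _, _, _, h, .cons h' (.cons h'' p), hp, he => by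
    have hp' : (cons h'' p).IsPath := hp.of_cons.of_cons
    obtain ⟨M, hM, hMv, -⟩ := hp'.exists_isMatching_support_cons (by simpa [parity_simps] using he)
    refine ⟨Γ.subgraphOfAdj h ⊔ M, (Subgraph.IsMatching.subgraphOfAdj h).sup hM ?_, ?_,
      Subgraph.sup_adj.mpr (Or.inl (subgraphOfAdj_adj_self h))⟩
    · rw [(Subgraph.IsMatching.subgraphOfAdj h).support_eq_verts, hM.support_eq_verts, hMv,
        subgraphOfAdj_verts]
      simp only [cons_isPath_iff, support_cons, List.mem_cons, not_or] at hp
      simp only [Set.disjoint_insert_left, Set.disjoint_singleton_left, Set.mem_ofPred_eq,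
        support_cons, List.mem_cons, not_or]
      tauto
    · ext z
      simp [hMv, or_assoc]

theorem isCycle_cons_append_cons {S : Set V} {v w₂ w₁ b : V} {hvw : Γ.Adj v w₂}
    {Q : Γ.Walk w₂ w₁} {hwb : Γ.Adj w₁ b} {P : Γ.Walk b v} (hQ : Q.IsPath) (hP : P.IsPath)
    (hQS : ∀ z ∈ Q.support, z ∈ S) (hPS : ∀ z ∈ P.support, z ∉ S) (hne : b ≠ v ∨ w₁ ≠ w₂) :
    (cons hvw (Q.append (cons hwb P))).IsCycle := by
  have hvS := hPS v P.end_mem_support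
  rw [cons_isCycle_iff]
  constructor
  · rw [isPath_def, support_append, support_cons, List.tail_cons, List.nodup_append]
    exact ⟨hQ.support_nodup, hP.support_nodup, fun a ha c hc hac => hPS c hc (hac ▸ hQS a ha)⟩
  · rw [edges_append, edges_cons, List.mem_append, List.mem_cons]
    rintro (h | h | h)
    · exact hvS (hQS v (Q.fst_mem_support_of_mem_edges h))
    · rcases Sym2.eq_iff.mp h with ⟨rfl, rfl⟩ | ⟨rfl, rfl⟩
      · exact hvS (hQS v Q.end_mem_support)
      · exact hne.elim (· rfl) (· rfl)
    · exact hPS w₂ (P.snd_mem_support_of_mem_edges h) (hQS w₂ Q.start_mem_support)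

theorem IsCycle.exists_isMatching_support_cons {a b : V} {h : Γ.Adj a b} {p : Γ.Walk b a}
    (hc : (cons h p).IsCycle) (he : Even (cons h p).length) :
    ∃ M : Γ.Subgraph, M.IsMatching ∧ M.verts = {z | z ∈ (cons h p).support} ∧ M.Adj a b := by
  have hp : ¬ p.Nil := not_nil_of_isCycle_cons hc
  have hsupp := support_dropLast_concat hp
  -- dropping the closing edge leaves an odd path through all vertices that starts with `ab`
  have hpath : (cons h p.dropLast).IsPath := by
    have := ((cons_isCycle_iff p h).mp hc).1.support_nodup
    rw [← hsupp, List.nodup_append] at this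
    exact .mk' <| this.1.cons fun ha => this.2.2 a ha a (List.mem_singleton_self a) rfl
  obtain ⟨M, hM, hMv, hMab⟩ := hpath.exists_isMatching_support_cons (by
    rw [length_cons, ← length_dropLast_add_one hp] at he
    simpa [parity_simps] using he)
  refine ⟨M, hM, ?_, hMab⟩
  rw [hMv]
  ext z
  simp only [support_cons, List.mem_cons, Set.mem_ofPred_eq, ← hsupp, List.mem_append]
  tauto

theorem IsCycle.hasPerfectMatchingOn_support {u : V} {c : Γ.Walk u u} (hc : c.IsCycle)
    (he : Even c.length) : Γ.HasPerfectMatchingOn {z | z ∈ c.support} := by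
  obtain ⟨v, h, p, rfl⟩ := not_nil_iff.mp hc.not_nil
  obtain ⟨M, hM, hMv, -⟩ := hc.exists_isMatching_support_cons he
  exact ⟨M, hM, hMv⟩

end Walk

end SimpleGraph

namespace MG

variable {V : Type*} {G H : MG V} {X : Set V}

theorem verts_subset_of_isMatching {M : G.toSimple.Subgraph} (hM : M.IsMatching) :
    M.verts ⊆ G.verts := fun v hv =>
  let ⟨w, hvw, _⟩ := hM hv
  (G.support v w (M.adj_sub hvw)).1

theorem mem_verts_of_mem_support {u v z : V} {p : G.toSimple.Walk u v} (hp : ¬ p.Nil)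
    (hz : z ∈ p.support) : z ∈ G.verts := by
  obtain ⟨e, he, hze⟩ := (Walk.mem_support_iff_exists_mem_edges_of_not_nil hp).mp hz
  induction e using Sym2.ind with
  | _ a b =>
    have hab : 0 < G.mult a b := p.adj_of_mem_edges he
    rcases Sym2.mem_iff.mp hze with rfl | rfl
    exacts [(G.support _ _ hab).1, (G.support _ _ hab).2]

theorem isPM_sup {M M' : G.toSimple.Subgraph} (hM : M.IsMatching) (hM' : M'.IsMatching)
    (hv : M.verts = G.verts \ M'.verts) : G.IsPM (M ⊔ M') := by
  refine ⟨hM.sup hM' ?_, ?_⟩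
  · rw [hM.support_eq_verts, hM'.support_eq_verts, hv]
    exact Set.disjoint_sdiff_left
  · rw [Subgraph.verts_sup, hv, Set.sdiff_union_of_subset (verts_subset_of_isMatching hM')]

theorem IsPM.mem_verts_of_adj {M : G.toSimple.Subgraph} (hM : G.IsPM M) {a b : V}
    (h : M.Adj a b) : b ∈ G.verts :=
  hM.2 ▸ M.edge_vert h.symm

namespace IsTightCut

variable {M : G.toSimple.Subgraph}

theorem exists_adj (hX : G.IsTightCut X) (hM : G.IsPM M) : ∃ a b, M.Adj a b ∧ a ∈ X ∧ b ∉ X :=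
  let ⟨⟨a, b⟩, ⟨ha, hb, hab⟩, _⟩ := hX.2.2.2 M hM
  ⟨a, b, hab, ha, hb.2⟩

theorem eq_of_adj (hX : G.IsTightCut X) (hM : G.IsPM M) {a b p q : V} (hab : M.Adj a b)
    (ha : a ∈ X) (hb : b ∉ X) (hpq : M.Adj p q) (hp : p ∈ X) (hq : q ∉ X) : p = a ∧ q = b := by
  obtain ⟨_, _, huniq⟩ := hX.2.2.2 M hM
  exact Prod.ext_iff.mp <| (huniq (p, q) ⟨hp, ⟨hM.mem_verts_of_adj hpq, hq⟩, hpq⟩).trans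
    (huniq (a, b) ⟨ha, ⟨hM.mem_verts_of_adj hab, hb⟩, hab⟩).symm

theorem leavesOnlyAt (hX : G.IsTightCut X) (hM : G.IsPM M) {w c : V} (hwc : M.Adj w c)
    (hw : w ∈ X) (hc : c ∉ X) : M.LeavesOnlyAt X w := by
  refine fun p q hpq hp => ⟨fun hq => (hX.eq_of_adj hM hwc hw hc hpq hp hq).1, ?_⟩
  rintro rfl
  rwa [hM.1.eq_of_adj_left hpq hwc]

end IsTightCut

theorem IsTightCut.compl (hX : G.IsTightCut X) : G.IsTightCut (G.verts \ X) := by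
  obtain ⟨hXG, ⟨w, hw⟩, hne, -⟩ := id hX
  refine ⟨Set.sdiff_subset, Set.sdiff_nonempty.mpr fun h => hne (hXG.antisymm h), fun h => ?_,
    fun M hM => ?_⟩
  · exact (h.symm ▸ hXG hw : w ∈ G.verts \ X).2 hw
  obtain ⟨a, b, hab, ha, hb⟩ := hX.exists_adj hM
  refine ⟨(b, a), ⟨⟨hM.mem_verts_of_adj hab, hb⟩, ⟨hM.mem_verts_of_adj hab.symm, fun h => h.2 ha⟩,
    hab.symm⟩, ?_⟩
  rintro ⟨p, q⟩ ⟨hp, ⟨hqG, hq⟩, hpq⟩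
  have hqX : q ∈ X := by_contra fun h => hq ⟨hqG, h⟩
  obtain ⟨rfl, rfl⟩ := hX.eq_of_adj hM hab ha hb hpq.symm hqX hp.2
  rfl

theorem IsTightCut.exists_even_isPath [Finite V] (hmc : G.MatchingCovered) (hX : G.IsTightCut X)
    {b v w₁ w₂ : V} (hb : b ∉ X) (hv : v ∉ X) (hw₁ : w₁ ∈ X) (hw₂ : w₂ ∈ X)
    (hbw : G.toSimple.Adj b w₁) (hvw : G.toSimple.Adj v w₂) :
    ∃ Q : G.toSimple.Walk w₁ w₂, Q.IsPath ∧ Even Q.length ∧ ∀ z ∈ Q.support, z ∈ X := by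
  obtain ⟨M₁, hM₁, hbw₁⟩ := hmc.2.2 b w₁ hbw
  obtain ⟨M₂, hM₂, hvw₂⟩ := hmc.2.2 v w₂ hvw
  exact hM₁.1.exists_even_isPath hM₂.1 (hM₁.2 ▸ hX.1) (hM₂.2 ▸ hX.1) hw₁ hw₂
    (hX.leavesOnlyAt hM₁ hbw₁.symm hw₁ hb) (hX.leavesOnlyAt hM₂ hvw₂.symm hw₂ hv)

variable [Fintype V] {x : V}

namespace ContractionOf

theorem mem_sdiff_of_mem_verts (hH : G.ContractionOf X x H) {z : V} (hz : z ∈ H.verts)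
    (hzx : z ≠ x) : z ∈ G.verts \ X := by
  rw [hH.2.1] at hz
  exact hz.resolve_right hzx

theorem adj_iff (hH : G.ContractionOf X x H) {u v : V} (hu : u ∉ X) (hv : v ∉ X) :
    H.toSimple.Adj u v ↔ G.toSimple.Adj u v := by
  change 0 < H.mult u v ↔ 0 < G.mult u v
  rw [hH.2.2.1 u v hu hv]

theorem exists_adj_of_adj (hH : G.ContractionOf X x H) {u : V} (hu : u ∉ X)
    (h : H.toSimple.Adj u x) : ∃ w ∈ X, G.toSimple.Adj u w := by
  have hpos : 0 < H.mult u x := h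
  rw [hH.2.2.2 u hu, Finset.sum_pos_iff] at hpos
  obtain ⟨w, hw, hpos⟩ := hpos
  exact ⟨w, (Finset.mem_filter.mp hw).2, hpos⟩

theorem edges_subset_edgeSet (hH : G.ContractionOf X x H) {u v : V} (p : H.toSimple.Walk u v)
    (hp : ∀ z ∈ p.support, z ∉ X) : ∀ e ∈ p.edges, e ∈ G.toSimple.edgeSet := by
  intro e he
  induction e using Sym2.ind with
  | _ a b =>
    exact (hH.adj_iff (hp a (p.fst_mem_support_of_mem_edges he))
      (hp b (p.snd_mem_support_of_mem_edges he))).mp (p.adj_of_mem_edges he)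

theorem hasPerfectMatchingOn_sdiff_of_forall_mem (hH : G.ContractionOf X x H)
    {M : G.toSimple.Subgraph} (hM : M.IsMatching) (hcross : ∀ ⦃p q⦄, M.Adj p q → p ∈ X → q ∈ X) :
    H.toSimple.HasPerfectMatchingOn (M.verts \ X) := by
  have hout : ∀ ⦃p q⦄, M.Adj p q → p ∈ M.verts \ X → q ∉ X := fun p q hpq hp hq =>
    hp.2 (hcross hpq.symm hq)
  exact hM.hasPerfectMatchingOn Set.sdiff_subset
    (fun p q hpq hp => ⟨M.edge_vert hpq.symm, hout hpq hp⟩)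
    (fun p q hpq hp => (hH.adj_iff hp.2 (hout hpq hp)).mpr hpq.adj_sub)

/-- The single edge `ab` of `M` leaving `X` becomes the edge `bx` of the contraction. -/
theorem hasPerfectMatchingOn_sdiff_union_of_adj (hH : G.ContractionOf X x H)
    {M : G.toSimple.Subgraph} (hM : M.IsMatching) {a b : V} (hab : M.Adj a b) (ha : a ∈ X)
    (hb : b ∉ X) (hcross : ∀ ⦃p q⦄, M.Adj p q → p ∈ X → q ∉ X → q = b) :
    H.toSimple.HasPerfectMatchingOn (M.verts \ X ∪ {x}) := by
  have hbx : H.toSimple.Adj b x := by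
    change 0 < H.mult b x
    rw [hH.2.2.2 b hb]
    exact lt_of_lt_of_le (hab.adj_sub.symm : 0 < G.mult b a)
      (Finset.single_le_sum (fun _ _ => Nat.zero_le _) (by simpa using ha))
  have hout : ∀ ⦃p q⦄, M.Adj p q → p ∈ (M.verts \ X) \ {b} → q ∉ X := fun p q hpq hp hq =>
    hp.2 (hcross hpq.symm hq hp.1.2)
  have hrest : H.toSimple.HasPerfectMatchingOn ((M.verts \ X) \ {b}) := by
    refine hM.hasPerfectMatchingOn (Set.sdiff_subset.trans Set.sdiff_subset)
      (fun p q hpq hp => ⟨⟨M.edge_vert hpq.symm, hout hpq hp⟩, ?_⟩)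
      (fun p q hpq hp => (hH.adj_iff hp.1.2 (hout hpq hp)).mpr hpq.adj_sub)
    rintro rfl
    exact hp.1.2 (hM.eq_of_adj_right hpq hab ▸ ha)
  convert hrest.union hbx.hasPerfectMatchingOn ?_ using 1
  · ext z
    have := M.edge_vert hab.symm
    by_cases hzb : z = b <;> simp_all
  · simp only [Set.disjoint_insert_right, Set.disjoint_singleton_right]
    exact ⟨fun h => h.2 rfl, fun h => h.1.2 hH.1⟩

theorem hasPerfectMatchingOn_of_crossing (hX : G.IsTightCut X) (hH : G.ContractionOf X x H)
    {T : Set V} {a b : V}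
    (hT : ∃ M : G.toSimple.Subgraph, M.IsMatching ∧ M.verts = T ∧ M.Adj a b) (ha : a ∈ X)
    (hb : b ∉ X) (hG : G.toSimple.HasPerfectMatchingOn (G.verts \ T)) :
    H.toSimple.HasPerfectMatchingOn ((G.verts \ T) \ X) := by
  obtain ⟨MT, hMT, rfl, hab⟩ := hT
  obtain ⟨M, hM, hMv⟩ := hG
  have hPM := isPM_sup hM hMT hMv
  rw [← hMv]
  -- the unique edge of `M ⊔ MT` crossing `∂(X)` is `ab`, so no edge of `M` crosses it
  refine hH.hasPerfectMatchingOn_sdiff_of_forall_mem hM fun p q hpq hp => by_contra fun hq => ?_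
  obtain ⟨rfl, -⟩ := hX.eq_of_adj hPM (Subgraph.sup_adj.mpr (.inr hab)) ha hb
    (Subgraph.sup_adj.mpr (.inl hpq)) hp hq
  exact (hMv ▸ M.edge_vert hpq).2 (MT.edge_vert hab)

theorem hasPerfectMatchingOn_of_disjoint (hX : G.IsTightCut X) (hH : G.ContractionOf X x H)
    {T : Set V} (hT : G.toSimple.HasPerfectMatchingOn T) (hTX : Disjoint T X)
    (hG : G.toSimple.HasPerfectMatchingOn (G.verts \ T)) :
    H.toSimple.HasPerfectMatchingOn ((G.verts \ T) \ X ∪ {x}) := by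
  obtain ⟨MT, hMT, rfl⟩ := hT
  obtain ⟨M, hM, hMv⟩ := hG
  have hPM := isPM_sup hM hMT hMv
  obtain ⟨a, b, hab, ha, hb⟩ := hX.exists_adj hPM
  have hab' : M.Adj a b := (Subgraph.sup_adj.mp hab).resolve_right fun h =>
    Set.disjoint_left.mp hTX (MT.edge_vert h) ha
  rw [← hMv]
  exact hH.hasPerfectMatchingOn_sdiff_union_of_adj hM hab' ha hb fun p q hpq hp hq =>
    (hX.eq_of_adj hPM hab ha hb (Subgraph.sup_adj.mpr (.inl hpq)) hp hq).2

theorem hasPerfectMatchingOn_sdiff_support_of_notMem (hX : G.IsTightCut X)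
    (hH : G.ContractionOf X x H) (hce : G.CycleExtendable) {u : V} {C : H.toSimple.Walk u u}
    (hC : C.IsCycle) (he : Even C.length) (hx : x ∉ C.support) :
    H.toSimple.HasPerfectMatchingOn (H.verts \ {z | z ∈ C.support}) := by
  have hCX : ∀ z ∈ C.support, z ∉ X := fun z hz =>
    (hH.mem_sdiff_of_mem_verts (mem_verts_of_mem_support hC.not_nil hz)
      (ne_of_mem_of_not_mem hz hx)).2
  set C' := C.transfer G.toSimple (hH.edges_subset_edgeSet C hCX)
  have hC' : C'.IsCycle := hC.transfer _
  have he' : Even C'.length := by rwa [Walk.length_transfer]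
  have hsupp : {z | z ∈ C'.support} = {z | z ∈ C.support} := by simp [C', Walk.support_transfer]
  have hT := hC'.hasPerfectMatchingOn_support he'
  have hG : G.toSimple.HasPerfectMatchingOn (G.verts \ {z | z ∈ C'.support}) := hce.1 u C' hC' he'
  rw [hsupp] at hT hG
  convert hH.hasPerfectMatchingOn_of_disjoint hX hT (Set.disjoint_left.mpr hCX) hG using 1
  rw [hH.2.1]
  ext z
  by_cases hzx : z = x
  · subst hzx; simp [hx]
  · simp [hzx]; tauto

theorem hasPerfectMatchingOn_sdiff_path (hmc : G.MatchingCovered) (hX : G.IsTightCut X)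
    (hH : G.ContractionOf X x H) (hce : G.CycleExtendable) {b v w₁ w₂ : V}
    (P : G.toSimple.Walk b v) (hP : P.IsPath) (hPX : ∀ z ∈ P.support, z ∉ X)
    (he : Even P.length) (hbw : G.toSimple.Adj b w₁) (hvw : G.toSimple.Adj v w₂) (hw₁ : w₁ ∈ X)
    (hw₂ : w₂ ∈ X) (hne : b ≠ v ∨ w₁ ≠ w₂) :
    H.toSimple.HasPerfectMatchingOn ((G.verts \ X) \ {z | z ∈ P.support}) := by
  have hvX := hPX v P.end_mem_support
  obtain ⟨Q, hQ, hQe, hQX⟩ :=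
    hX.exists_even_isPath hmc hvX (hPX b P.start_mem_support) hw₂ hw₁ hvw hbw
  set C := Walk.cons hvw (Q.append (.cons hbw.symm P))
  have hC : C.IsCycle := Walk.isCycle_cons_append_cons hQ hP hQX hPX hne
  have he' : Even C.length := by
    simp only [C, Walk.length_cons, Walk.length_append]
    obtain ⟨k, hk⟩ := hQe
    obtain ⟨l, hl⟩ := he
    exact ⟨k + l + 1, by omega⟩
  obtain ⟨T, hT, hTv, hTadj⟩ := hC.exists_isMatching_support_cons he'
  convert hH.hasPerfectMatchingOn_of_crossing hX ⟨T, hT, hTv, hTadj.symm⟩ hw₂ hvX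
    (hce.1 v C hC he') using 1
  ext z
  simp only [Set.mem_sdiff, Set.mem_ofPred_eq, Walk.support_cons, Walk.support_append,
    List.tail_cons, List.mem_cons, List.mem_append]
  constructor
  · rintro ⟨⟨hzG, hzX⟩, hzP⟩
    refine ⟨⟨hzG, ?_⟩, hzX⟩
    rintro (rfl | hz | hz)
    exacts [hzP P.end_mem_support, hzX (hQX z hz), hzP hz]
  · rintro ⟨⟨hzG, hz⟩, hzX⟩
    exact ⟨⟨hzG, hzX⟩, fun h => hz (.inr (.inr h))⟩

theorem hasPerfectMatchingOn_sdiff_support_self (hmc : G.MatchingCovered)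
    (hX : G.IsTightCut X) (hH : G.ContractionOf X x H) (hce : G.CycleExtendable)
    {C : H.toSimple.Walk x x} (hC : C.IsCycle) (he : Even C.length) :
    H.toSimple.HasPerfectMatchingOn (H.verts \ {z | z ∈ C.support}) := by
  obtain ⟨b, hxb, R, rfl⟩ := Walk.not_nil_iff.mp hC.not_nil
  have hR : ¬ R.Nil := Walk.not_nil_of_isCycle_cons hC
  have hRpath := ((Walk.cons_isCycle_iff R hxb).mp hC).1
  set P := R.dropLast
  have hsupp : P.support ++ [x] = R.support := Walk.support_dropLast_concat hR
  have hxP : x ∉ P.support := by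
    have := hRpath.support_nodup
    rw [← hsupp, List.nodup_append] at this
    exact fun h => this.2.2 x h x (List.mem_singleton_self x) rfl
  have hPX : ∀ z ∈ P.support, z ∈ G.verts \ X := fun z hz =>
    hH.mem_sdiff_of_mem_verts (mem_verts_of_mem_support hC.not_nil (by simp [← hsupp, hz]))
      (ne_of_mem_of_not_mem hz hxP)
  have hbX := hPX b P.start_mem_support
  have hvX := hPX _ P.end_mem_support
  obtain ⟨w₁, hw₁, hbw₁⟩ := hH.exists_adj_of_adj hbX.2 hxb.symm
  obtain ⟨w₂, hw₂, hvw₂⟩ := hH.exists_adj_of_adj hvX.2 (R.adj_penultimate hR)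
  have hlen : P.length + 2 = (Walk.cons hxb R).length := by
    rw [Walk.length_cons, ← Walk.length_dropLast_add_one hR]
  have hbv : b ≠ R.penultimate := fun h =>
    (Walk.not_nil_iff_lt_length (p := P)).mpr (by have := hC.three_le_length; omega)
      (hRpath.dropLast.nil_iff_eq.mpr h)
  convert hH.hasPerfectMatchingOn_sdiff_path hmc hX hce
    (P.transfer G.toSimple (hH.edges_subset_edgeSet P fun z hz => (hPX z hz).2))
    (hRpath.dropLast.transfer _) (by simpa [Walk.support_transfer] using fun z hz => (hPX z hz).2)
    (by rw [Walk.length_transfer]; rw [← hlen] at he; simpa [parity_simps] using he)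
    hbw₁ hvw₂ hw₁ hw₂ (.inl hbv) using 1
  rw [hH.2.1]
  ext z
  simp only [Set.mem_sdiff, Set.mem_union, Set.mem_ofPred_eq, Set.mem_singleton_iff,
    Walk.support_transfer, Walk.support_cons, ← hsupp, List.mem_cons, List.mem_append,
    List.not_mem_nil, or_false]
  by_cases hzx : z = x
  · simp [hzx, hH.1]
  · simp [hzx]

theorem hasPerfectMatchingOn_sdiff_pair (hX : G.IsTightCut X) (hH : G.ContractionOf X x H)
    (hce : G.CycleExtendable) {u v : V} (hu : u ≠ x) (hv : v ≠ x) (h : 2 ≤ H.mult u v) :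
    H.toSimple.HasPerfectMatchingOn (H.verts \ {u, v}) := by
  have huv : H.toSimple.Adj u v := by change 0 < H.mult u v; omega
  have huX := hH.mem_sdiff_of_mem_verts (H.support u v huv).1 hu
  have hvX := hH.mem_sdiff_of_mem_verts (H.support u v huv).2 hv
  have hG : 2 ≤ G.mult u v := hH.2.2.1 u v huX.2 hvX.2 ▸ h
  convert hH.hasPerfectMatchingOn_of_disjoint hX
    ((hH.adj_iff huX.2 hvX.2).mp huv).hasPerfectMatchingOn (by simp [huX.2, hvX.2])
    (hce.2 u v hG) using 1
  rw [hH.2.1]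
  ext z
  by_cases hzx : z = x
  · simp [hzx, hH.1, hu.symm, hv.symm]
  · simp [hzx]
    tauto

theorem hasPerfectMatchingOn_sdiff_pair_self (hmc : G.MatchingCovered) (hX : G.IsTightCut X)
    (hH : G.ContractionOf X x H) (hce : G.CycleExtendable) {u : V} (hu : u ≠ x)
    (h : 2 ≤ H.mult u x) : H.toSimple.HasPerfectMatchingOn (H.verts \ {u, x}) := by
  have huX := hH.mem_sdiff_of_mem_verts (H.support u x (by omega)).1 hu
  have hverts : H.verts \ {u, x} = (G.verts \ X) \ {u} := by
    rw [hH.2.1]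
    ext z
    by_cases hzx : z = x
    · simp [hzx, hH.1]
    · simp [hzx]
  rw [hverts]
  rw [hH.2.2.2 u huX.2] at h
  rcases Finset.exists_two_le_or_exists_ne_of_two_le_sum h with
    ⟨w, hw, h2⟩ | ⟨w₁, hw₁, w₂, hw₂, hne, h₁, h₂⟩
  · have hwX : w ∈ X := (Finset.mem_filter.mp hw).2
    have huw : G.toSimple.Adj u w := by change 0 < G.mult u w; omega
    convert hH.hasPerfectMatchingOn_of_crossing hX
      ⟨_, .subgraphOfAdj huw, G.toSimple.subgraphOfAdj_verts huw,
        (subgraphOfAdj_adj_self huw).symm⟩ hwX huX.2 (hce.2 u w h2) using 1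
    ext z
    by_cases hzw : z = w
    · simp [hzw, hwX]
    · simp [hzw]
      tauto
  · convert hH.hasPerfectMatchingOn_sdiff_path hmc hX hce (.nil : G.toSimple.Walk u u) .nil
      (by simpa using huX.2) .zero h₁ h₂ (Finset.mem_filter.mp hw₁).2
      (Finset.mem_filter.mp hw₂).2 (.inr hne) using 1
    simp

end ContractionOf

theorem IsTightCut.cycleExtendable_of_contractionOf (hmc : G.MatchingCovered)
    (hX : G.IsTightCut X) (hH : G.ContractionOf X x H) (hce : G.CycleExtendable) :
    H.CycleExtendable := by
  refine ⟨fun u C hC he => ?_, fun u v h => ?_⟩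
  · by_cases hx : x ∈ C.support
    · have hsupp : {z | z ∈ C.support} = {z | z ∈ (C.rotate x hx).support} := by simp
      rw [hsupp]
      exact hH.hasPerfectMatchingOn_sdiff_support_self hmc hX hce (hC.rotate hx)
        (by rwa [Walk.length_rotate])
    · exact hH.hasPerfectMatchingOn_sdiff_support_of_notMem hX hce hC he hx
  · by_cases hu : u = x
    · subst hu
      have hv : v ≠ u := by rintro rfl; simp [H.loopless] at h
      rw [Set.pair_comm]
      exact hH.hasPerfectMatchingOn_sdiff_pair_self hmc hX hce hv (H.symm u v ▸ h)
    · by_cases hv : v = x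
      · subst hv
        exact hH.hasPerfectMatchingOn_sdiff_pair_self hmc hX hce hu h
      · exact hH.hasPerfectMatchingOn_sdiff_pair hX hce hu hv h

end MG

theorem contractions_cycleExtendable_of_cycleExtendable_general {V : Type*} [Fintype V]
    (G H₁ H₂ : MG V) (X : Set V) (x y : V)
    (hmc : G.MatchingCovered)
    (htight : G.IsTightCut X)
    (h₁ : G.ContractionOf X x H₁)
    (h₂ : G.ContractionOf (G.verts \ X) y H₂)
    (hce : G.CycleExtendable) :
    H₁.CycleExtendable ∧ H₂.CycleExtendable :=
  ⟨htight.cycleExtendable_of_contractionOf hmc h₁ hce,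
    htight.compl.cycleExtendable_of_contractionOf hmc h₂ hce⟩

/-- Let `G` be a matching covered graph and `∂(X)` a nontrivial tight
cut of `G`.  If `G` is cycle-extendable, then both `∂(X)`-contractions `G/X` and
`G/X̄` are cycle-extendable. -/
theorem contractions_cycleExtendable_of_cycleExtendable {V : Type*} [Fintype V]
    (G H₁ H₂ : MG V) (X : Set V) (x y : V)
    (hmc : G.MatchingCovered)
    (htight : G.IsTightCut X) (hnontrivial : G.IsNontrivialCut X)
    (h₁ : G.ContractionOf X x H₁)
    (h₂ : G.ContractionOf (G.verts \ X) y H₂)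
    (hce : G.CycleExtendable) :
    H₁.CycleExtendable ∧ H₂.CycleExtendable :=
  contractions_cycleExtendable_of_cycleExtendable_general G H₁ H₂ X x y hmc htight h₁ h₂ hce
end

section
/- If a 3-connected graph contains a mixed bicycle, then it is K_{2,3}-based, i.e., it contains a subgraph that is a bisubdivision of the complete bipartite graph K_{2,3}. -/
open SimpleGraph

variable {V : Type*}

/-- `G` contains a subgraph which is a subdivision of `K` in which the path replacing
each edge has length satisfying `okLen`: there are internally disjoint paths in `G`
joining the images of the branch vertices. -/
def HasSubdiv {W : Type*} (G : SimpleGraph V) (K : SimpleGraph W) (okLen : ℕ → Prop) : Prop :=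
  ∃ (f : W ↪ V) (p : ∀ a b : W, K.Adj a b → G.Walk (f a) (f b)),
    (∀ a b hab, (p a b hab).IsPath) ∧
    (∀ a b hab, okLen (p a b hab).length) ∧
    (∀ a b hab (c : W), f c ∈ (p a b hab).support → c = a ∨ c = b) ∧
    (∀ a b hab a' b' hab', s(a, b) ≠ s(a', b') →
      ∀ w, w ∈ (p a b hab).support → w ∈ (p a' b' hab').support →
        (w = f a ∨ w = f b) ∧ (w = f a' ∨ w = f b'))

/-- `G` is `K`-based: some subgraph of `G` is a bisubdivision of `K` (each edge of `K`
is replaced by an odd path, i.e. subdivided by an even number of vertices). -/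
def IsBasedOn {W : Type*} (G : SimpleGraph V) (K : SimpleGraph W) : Prop :=
  HasSubdiv G K Odd

/-- `G` contains a subdivision of `K`. -/
def ContainsSubdivision {W : Type*} (G : SimpleGraph V) (K : SimpleGraph W) : Prop :=
  HasSubdiv G K fun _ => True

/-- Planarity, via Kuratowski's characterization: no subdivision of `K₅` nor of `K₃,₃`. -/
def IsPlanar (G : SimpleGraph V) : Prop :=
  ¬ ContainsSubdivision G (⊤ : SimpleGraph (Fin 5)) ∧
  ¬ ContainsSubdivision G (completeBipartiteGraph (Fin 3) (Fin 3))

/-- `G` is `K₂,₃`-based: it contains a subgraph that is a bisubdivision of `K₂,₃`. -/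
def K23Based (G : SimpleGraph V) : Prop :=
  IsBasedOn G (completeBipartiteGraph (Fin 2) (Fin 3))
/-- A mixed bicycle: a pair of vertex-disjoint cycles, one odd and one even
(of length at least four). -/
def HasMixedBicycle (G : SimpleGraph V) : Prop :=
  ∃ (u v : V) (Qo : G.Walk u u) (Qe : G.Walk v v),
    Qo.IsCycle ∧ Qe.IsCycle ∧ Odd Qo.length ∧ Even Qe.length ∧ 4 ≤ Qe.length ∧
    ∀ w ∈ Qo.support, w ∉ Qe.support

/-!
By 3-connectivity and Menger's theorem there are three disjoint paths from the even cycle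
`Q_e` to the odd cycle `Q_o`. Two of their three ends on `Q_e` split `Q_e` into two even
arcs, and the two paths starting there, joined by the arc of `Q_o` of the right parity, give a
third even path between these ends. Three internally disjoint even `s`–`t` paths form a
bisubdivision of `K₂,₃`: `s` and `t` on one side, the second vertices of the paths on the other.
-/

namespace SimpleGraph

variable {W : Type*} {G : SimpleGraph V}

namespace Walk

def InternallyDisjoint {u v : V} (p q : G.Walk u v) : Prop :=
  ∀ w ∈ p.support, w ∈ q.support → w = u ∨ w = v

theorem InternallyDisjoint.symm {u v : V} {p q : G.Walk u v} (h : p.InternallyDisjoint q) :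
    q.InternallyDisjoint p :=
  fun w hq hp => h w hp hq

theorem InternallyDisjoint.reverse {u v : V} {p q : G.Walk u v} (h : p.InternallyDisjoint q) :
    p.reverse.InternallyDisjoint q.reverse := by
  intro w hp hq
  rw [support_reverse, List.mem_reverse] at hp hq
  exact (h w hp hq).symm

theorem IsPath.append {u v w : V} {p : G.Walk u v} {q : G.Walk v w} (hp : p.IsPath)
    (hq : q.IsPath) (h : ∀ z ∈ p.support, z ∈ q.support → z = v) : (p.append q).IsPath := by
  rw [isPath_def, support_append]
  have hq' := q.cons_tail_support ▸ hq.support_nodup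
  refine hp.support_nodup.append (List.nodup_cons.mp hq').2 fun z hzp hzq => ?_
  obtain rfl := h z hzp (List.mem_of_mem_tail hzq)
  exact (List.nodup_cons.mp hq').1 hzq

theorem IsPath.eq_of_mem_support_append {u v w z : V} {p : G.Walk u v} {q : G.Walk v w}
    (h : (p.append q).IsPath) (hp : z ∈ p.support) (hq : z ∈ q.support) : z = v := by
  by_contra hzv
  exact h.ne_of_mem_support_of_append hzv hp hq rfl

theorem exists_prefix_first_mem (S : Set V) {a b : V} (w : G.Walk a b)
    (h : ∃ v ∈ w.support, v ∈ S) :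
    ∃ c ∈ S, ∃ (q : G.Walk a c) (r : G.Walk c b), w = q.append r ∧
      ∀ v ∈ q.support, v ∈ S → v = c := by
  induction w with
  | nil =>
    obtain ⟨v, hv, hvS⟩ := h
    obtain rfl := mem_support_nil_iff.mp hv
    exact ⟨v, hvS, nil, nil, rfl, by simp⟩
  | @cons a d b had w ih =>
    by_cases ha : a ∈ S
    · exact ⟨a, ha, nil, cons had w, rfl, by simp⟩
    have h' : ∃ v ∈ w.support, v ∈ S := by
      obtain ⟨v, hv, hvS⟩ := h
      rcases (mem_support_iff _).mp hv with rfl | hv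
      · exact absurd hvS ha
      · exact ⟨v, hv, hvS⟩
    obtain ⟨c, hc, q, r, rfl, hfirst⟩ := ih h'
    refine ⟨c, hc, cons had q, r, rfl, fun v hv hvS => ?_⟩
    rcases (mem_support_iff _).mp hv with rfl | hv
    · exact absurd hvS ha
    · exact hfirst v hv hvS

theorem exists_isPath_meeting_ends_only (A B : Set V) {a b : V} (w : G.Walk a b) (ha : a ∈ A)
    (hb : b ∈ B) :
    ∃ a' ∈ A, ∃ b' ∈ B, ∃ p : G.Walk a' b', p.IsPath ∧ p.support ⊆ w.support ∧
      (∀ v ∈ p.support, v ∈ A → v = a') ∧ (∀ v ∈ p.support, v ∈ B → v = b') := by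
  classical
  obtain ⟨b', hb', q, -, rfl, hqB⟩ := w.exists_prefix_first_mem B ⟨b, w.end_mem_support, hb⟩
  obtain ⟨a', ha', r, r', hqr, hrA⟩ := q.reverse.exists_prefix_first_mem A ⟨a, by simp, ha⟩
  have hrq : r.support ⊆ q.support := fun v hv => by
    have : v ∈ q.reverse.support := hqr ▸ (mem_support_append_iff _ _).mpr (.inl hv)
    simpa using this
  have hsub : ∀ v ∈ r.reverse.bypass.support, v ∈ r.support := fun v hv => by
    simpa using support_bypass_subset_support _ hv
  refine ⟨a', ha', b', hb', r.reverse.bypass, bypass_isPath _,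
    fun v hv => (mem_support_append_iff _ _).mpr (.inl (hrq (hsub v hv))),
    fun v hv => hrA v (hsub v hv), fun v hv => hqB v (hrq (hsub v hv))⟩

theorem exists_walk_map (f : V → W) {a b : V} (p : G.Walk a b) :
    ∃ q : (G.map f).Walk (f a) (f b), q.support ⊆ p.support.map f := by
  induction p with
  | nil => exact ⟨nil, by simp⟩
  | @cons a d b had p ih =>
    obtain ⟨q, hq⟩ := ih
    by_cases hfad : f a = f d
    · refine ⟨q.copy hfad.symm rfl, fun w hw => ?_⟩
      rw [support_copy] at hw
      simpa using Or.inr (List.mem_map.mp (hq hw))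
    · refine ⟨cons (map_adj_apply' had hfad) q, fun w hw => ?_⟩
      rcases (mem_support_iff _).mp hw with rfl | hw
      · simp
      · simpa using Or.inr (List.mem_map.mp (hq hw))

theorem exists_walk_of_map (f : V → W)
    (hfib : ∀ a b, f a = f b → ∃ q : G.Walk a b, ∀ w ∈ q.support, f w = f a)
    {u v : W} (p : (G.map f).Walk u v) :
    ∀ a b, f a = u → f b = v →
      ∃ q : G.Walk a b, ∀ w ∈ q.support, f w ∈ p.support := by
  induction p with
  | nil =>
    intro a b ha hb
    obtain ⟨q, hq⟩ := hfib a b (ha.trans hb.symm)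
    exact ⟨q, fun w hw => by simp [hq w hw, ha]⟩
  | @cons u d v had p ih =>
    intro a b ha hb
    obtain ⟨-, a', d', hadj, hfa', hfd'⟩ := had
    obtain ⟨q₁, hq₁⟩ := hfib a a' (ha.trans hfa'.symm)
    obtain ⟨q₂, hq₂⟩ := ih d' b hfd' hb
    refine ⟨q₁.append (cons hadj q₂), fun w hw => ?_⟩
    rcases (mem_support_append_iff _ _).mp hw with hw | hw
    · simp [hq₁ w hw, ha]
    rcases (mem_support_iff _).mp hw with rfl | hw
    · simp [hfa']
    · exact List.mem_cons_of_mem _ (hq₂ w hw)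

end Walk

theorem ncard_edgeSet_map_lt [Finite V] (f : V → W) {x y : V} (hxy : G.Adj x y)
    (hf : f x = f y) : (G.map f).edgeSet.ncard < G.edgeSet.ncard := by
  have hsub : (G.map f).edgeSet ⊆ Sym2.map f '' (G.edgeSet \ {s(x, y)}) := by
    intro e he
    induction e using Sym2.ind with
    | _ u v =>
    obtain ⟨huv, u', v', hadj, rfl, rfl⟩ := he
    refine ⟨s(u', v'), ⟨hadj, fun he => huv ?_⟩, rfl⟩
    rcases Sym2.eq_iff.mp he with ⟨rfl, rfl⟩ | ⟨rfl, rfl⟩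
    exacts [hf, hf.symm]
  calc (G.map f).edgeSet.ncard ≤ (Sym2.map f '' (G.edgeSet \ {s(x, y)})).ncard :=
        Set.ncard_le_ncard hsub (Set.toFinite _)
    _ ≤ (G.edgeSet \ {s(x, y)}).ncard := Set.ncard_image_le (Set.toFinite _)
    _ < G.edgeSet.ncard := Set.ncard_sdiff_singleton_lt_of_mem hxy (Set.toFinite _)

theorem exists_walk_of_update_eq [DecidableEq V] {x y : V} (hxy : G.Adj x y) (a b : V)
    (h : Function.update id y x a = Function.update id y x b) :
    ∃ q : G.Walk a b, ∀ w ∈ q.support,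
      Function.update id y x w = Function.update id y x a := by
  by_cases hab : a = b
  · subst hab
    exact ⟨Walk.nil, by simp⟩
  by_cases ha : a = y <;> by_cases hb : b = y <;>
    simp only [Function.update_apply, id, ha, hb, if_true, if_false] at h
  · exact absurd (ha.trans hb.symm) hab
  · subst ha h
    exact ⟨Walk.cons hxy.symm Walk.nil, by simp [Function.update_apply]⟩
  · subst hb h
    exact ⟨Walk.cons hxy Walk.nil, by simp [Function.update_apply]⟩
  · exact absurd h hab

def Separates (G : SimpleGraph V) (A B S : Set V) : Prop :=
  ∀ ⦃a b : V⦄, a ∈ A → b ∈ B → ∀ w : G.Walk a b, ∃ v ∈ w.support, v ∈ S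

namespace Separates

variable {A B S : Set V}

theorem symm (h : G.Separates A B S) : G.Separates B A S := fun _ _ ha hb w => by
  simpa using h hb ha w.reverse

theorem preimage (f : V → W) {T : Set W} (h : (G.map f).Separates (f '' A) (f '' B) T) :
    G.Separates A B (f ⁻¹' T) := by
  intro a b ha hb w
  obtain ⟨q, hq⟩ := w.exists_walk_map f
  obtain ⟨v, hv, hvT⟩ := h ⟨a, ha, rfl⟩ ⟨b, hb, rfl⟩ q
  obtain ⟨u, hu, rfl⟩ := List.mem_map.mp (hq hv)
  exact ⟨u, hu, hvT⟩

/-- An `A`–`B` walk, cut at its first vertex in `S`, does not use the edge `xy`. -/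
theorem of_deleteEdges_left {x y : V} {X : Set V} (hS : G.Separates A B S) (hx : x ∈ S)
    (hy : y ∈ S) (hX : (G.deleteEdges {s(x, y)}).Separates A S X) : G.Separates A B X := by
  intro a b ha hb w
  obtain ⟨c, hc, q, r, rfl, hfirst⟩ := w.exists_prefix_first_mem S (hS ha hb w)
  have hq : ∀ e ∈ q.edges, e ∈ (G.deleteEdges {s(x, y)}).edgeSet := by
    intro e he
    rw [edgeSet_deleteEdges]
    refine ⟨q.edges_subset_edgeSet he, fun hexy => ?_⟩
    obtain rfl := Set.mem_singleton_iff.mp hexy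
    have hxc := hfirst x (q.fst_mem_support_of_mem_edges he) hx
    have hyc := hfirst y (q.snd_mem_support_of_mem_edges he) hy
    exact (q.adj_of_mem_edges he).ne (hxc.trans hyc.symm)
  obtain ⟨v, hv, hvX⟩ := hX ha hc (q.transfer _ hq)
  exact ⟨v, (Walk.mem_support_append_iff _ _).mpr (.inl (by simpa using hv)), hvX⟩

theorem of_deleteEdges_right {x y : V} {X : Set V} (hS : G.Separates A B S) (hx : x ∈ S)
    (hy : y ∈ S) (hX : (G.deleteEdges {s(x, y)}).Separates S B X) : G.Separates A B X :=
  (hS.symm.of_deleteEdges_left hx hy hX.symm).symm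

theorem mem_of_mem_support {a s s' b v : V} (hS : G.Separates A B S) (ha : a ∈ A) (hb : b ∈ B)
    {P : G.Walk a s} {Q : G.Walk s' b} (hP : P.IsPath) (hQ : Q.IsPath)
    (hPS : ∀ u ∈ P.support, u ∈ S → u = s) (hQS : ∀ u ∈ Q.support, u ∈ S → u = s')
    (hvP : v ∈ P.support) (hvQ : v ∈ Q.support) : v ∈ S := by
  classical
  by_contra hv
  have hP' : ((P.takeUntil v hvP).append (P.dropUntil v hvP)).IsPath := by rwa [P.take_spec]
  have hQ' : ((Q.takeUntil v hvQ).append (Q.dropUntil v hvQ)).IsPath := by rwa [Q.take_spec]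
  obtain ⟨z, hz, hzS⟩ := hS ha hb ((P.takeUntil v hvP).append (Q.dropUntil v hvQ))
  rcases (Walk.mem_support_append_iff _ _).mp hz with hz | hz
  · obtain rfl := hPS z (P.support_takeUntil_subset_support hvP hz) hzS
    rw [hP'.eq_of_mem_support_append hz (Walk.end_mem_support _)] at hzS
    exact hv hzS
  · obtain rfl := hQS z (Q.support_dropUntil_subset_support hvQ hz) hzS
    rw [hQ'.eq_of_mem_support_append (Walk.start_mem_support _) hz] at hzS
    exact hv hzS

end Separates

structure DisjointPaths (G : SimpleGraph V) (A B : Set V) (k : ℕ) where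
  src : Fin k → V
  dst : Fin k → V
  path : ∀ i, G.Walk (src i) (dst i)
  src_mem : ∀ i, src i ∈ A
  dst_mem : ∀ i, dst i ∈ B
  isPath : ∀ i, (path i).IsPath
  disjoint : Pairwise fun i j => ∀ v ∈ (path i).support, v ∉ (path j).support

namespace DisjointPaths

variable {A B : Set V} {k : ℕ}

theorem src_injective (F : G.DisjointPaths A B k) : Function.Injective F.src := fun i j h => by
  by_contra hij
  exact F.disjoint hij _ (F.path i).start_mem_support
    (by rw [h]; exact (F.path j).start_mem_support)

theorem dst_injective (F : G.DisjointPaths A B k) : Function.Injective F.dst := fun i j h => by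
  by_contra hij
  exact F.disjoint hij _ (F.path i).end_mem_support (by rw [h]; exact (F.path j).end_mem_support)

def mapLe {G' : SimpleGraph V} (hle : G ≤ G') (F : G.DisjointPaths A B k) :
    G'.DisjointPaths A B k where
  src := F.src
  dst := F.dst
  path i := (F.path i).mapLe hle
  src_mem := F.src_mem
  dst_mem := F.dst_mem
  isPath i := (F.isPath i).mapLe hle
  disjoint i j hij v hi hj := F.disjoint hij v (by simpa using hi) (by simpa using hj)

theorem exists_meeting_ends_only (F : G.DisjointPaths A B k) :
    ∃ F' : G.DisjointPaths A B k, ∀ i, ∀ v ∈ (F'.path i).support,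
      (v ∈ A → v = F'.src i) ∧ (v ∈ B → v = F'.dst i) := by
  choose a ha b hb p hp hsub hA hB using fun i =>
    (F.path i).exists_isPath_meeting_ends_only A B (F.src_mem i) (F.dst_mem i)
  refine ⟨⟨a, b, p, ha, hb, hp, fun i j hij v hi hj => ?_⟩,
    fun i v hv => ⟨hA i v hv, hB i v hv⟩⟩
  exact F.disjoint hij v (hsub i hi) (hsub j hj)

theorem nonempty_of_map (f : V → W)
    (hfib : ∀ a b, f a = f b → ∃ q : G.Walk a b, ∀ w ∈ q.support, f w = f a)
    (F : (G.map f).DisjointPaths (f '' A) (f '' B) k) : Nonempty (G.DisjointPaths A B k) := by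
  classical
  choose a ha hfa using F.src_mem
  choose b hb hfb using F.dst_mem
  choose q hq using fun i => (F.path i).exists_walk_of_map f hfib (a i) (b i) (hfa i) (hfb i)
  refine ⟨⟨a, b, fun i => (q i).bypass, ha, hb, fun i => (q i).bypass_isPath, ?_⟩⟩
  intro i j hij v hi hj
  exact F.disjoint hij _ (hq i v ((q i).support_bypass_subset_support hi))
    (hq j v ((q j).support_bypass_subset_support hj))

theorem nonempty_of_edgeSet_eq_empty [Finite V] (hE : G.edgeSet = ∅)
    (hsep : ∀ S, G.Separates A B S → k ≤ S.ncard) : Nonempty (G.DisjointPaths A B k) := by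
  classical
  have hAB : G.Separates A B (A ∩ B) := by
    intro a b ha hb w
    cases w with
    | nil => exact ⟨a, Walk.start_mem_support _, ha, hb⟩
    | cons h _ => exact absurd (G.mem_edgeSet.mpr h) (by simp [hE])
  have : Fintype ↥(A ∩ B) := Fintype.ofFinite _
  obtain ⟨g⟩ : Nonempty (Fin k ↪ ↥(A ∩ B)) := Function.Embedding.nonempty_of_card_le (by
    rw [Fintype.card_fin, ← Nat.card_eq_fintype_card, Nat.card_coe_set_eq]
    exact hsep _ hAB)
  refine ⟨⟨fun i => g i, fun i => g i, fun _ => Walk.nil, fun i => (g i).2.1,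
    fun i => (g i).2.2, fun _ => Walk.IsPath.nil,
    fun i j hij v hi hj => hij (g.injective (Subtype.ext ?_))⟩⟩
  simp only [Walk.support_nil, List.mem_singleton] at hi hj
  exact hi.symm.trans hj

theorem nonempty_of_separates [Finite V] {S : Set V} (hS : G.Separates A B S)
    (hcard : S.ncard = k) (F₁ : G.DisjointPaths A S k) (F₂ : G.DisjointPaths S B k) :
    Nonempty (G.DisjointPaths A B k) := by
  obtain ⟨T₁, hT₁⟩ := F₁.exists_meeting_ends_only
  obtain ⟨T₂, hT₂⟩ := F₂.exists_meeting_ends_only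
  have hrange : Set.range T₂.src = S := by
    refine Set.eq_of_subset_of_ncard_le (Set.range_subset_iff.2 T₂.src_mem) ?_ (Set.toFinite _)
    rw [Set.ncard_range_of_injective T₂.src_injective, Nat.card_fin, hcard]
  have hsurj : ∀ i, ∃ j, T₂.src j = T₁.dst i := fun i => by
    simpa [← hrange] using T₁.dst_mem i
  choose σ hσ using hsurj
  have hmeet : ∀ i j, ∀ v ∈ (T₁.path i).support, v ∈ (T₂.path j).support →
      v = T₁.dst i ∧ v = T₂.src j := fun i j v hi hj =>
    have hvS := hS.mem_of_mem_support (T₁.src_mem i) (T₂.dst_mem j) (T₁.isPath i)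
      (T₂.isPath j) (fun u hu => (hT₁ i u hu).2) (fun u hu => (hT₂ j u hu).1) hi hj
    ⟨(hT₁ i v hi).2 hvS, (hT₂ j v hj).1 hvS⟩
  refine ⟨⟨T₁.src, fun i => T₂.dst (σ i),
    fun i => (T₁.path i).append ((T₂.path (σ i)).copy (hσ i) rfl), T₁.src_mem,
    fun i => T₂.dst_mem _, fun i => ?_, fun i j hij v hi hj => ?_⟩⟩
  · refine (T₁.isPath i).append (by simpa using T₂.isPath (σ i)) fun z hz₁ hz₂ => ?_
    exact (hmeet i (σ i) z hz₁ (by simpa using hz₂)).1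
  · have hσinj : σ i ≠ σ j := fun h => hij (T₁.dst_injective (by rw [← hσ, ← hσ, h]))
    simp only [Walk.mem_support_append_iff, Walk.support_copy] at hi hj
    rcases hi with hi | hi <;> rcases hj with hj | hj
    · exact T₁.disjoint hij v hi hj
    · obtain ⟨h₁, h₂⟩ := hmeet i (σ j) v hi hj
      exact hij (T₁.dst_injective (h₁.symm.trans (h₂.trans (hσ j))))
    · obtain ⟨h₁, h₂⟩ := hmeet j (σ i) v hj hi
      exact hij (T₁.dst_injective (h₁.symm.trans (h₂.trans (hσ i)))).symm
    · exact T₂.disjoint hσinj v hi hj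

end DisjointPaths

/-- `G.map (Function.update id y x)` is `G` with the edge `xy` contracted onto `x`. The
witness is the preimage of `T`: it has at most one vertex more than `T`, and it contains `x`
and `y` since `x ∈ T` is forced. -/
theorem exists_separates_ncard_eq_of_contract [Finite V] [DecidableEq V] {A B T : Set V}
    {k : ℕ} {x y : V} (hxy : G.Adj x y) (hsep : ∀ S, G.Separates A B S → k ≤ S.ncard)
    (hT : (G.map (Function.update id y x)).Separates
      (Function.update id y x '' A) (Function.update id y x '' B) T)
    (hTk : T.ncard < k) : ∃ S, G.Separates A B S ∧ S.ncard = k ∧ x ∈ S ∧ y ∈ S := by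
  set π : V → V := Function.update id y x with hπ
  have hS := hT.preimage π
  have hpre : π ⁻¹' T ⊆ insert y T := fun v hv => by
    by_cases hvy : v = y
    · exact .inl hvy
    · exact .inr (by simpa [hπ, hvy] using hv)
  have hxT : x ∈ T := by
    by_contra hxT
    have hsub : π ⁻¹' T ⊆ T := fun v hv => by
      rcases hpre hv with rfl | hv'
      · exact absurd (by simpa [hπ] using hv) hxT
      · exact hv'
    have := (hsep _ hS).trans (Set.ncard_le_ncard hsub)
    omega
  have := (Set.ncard_le_ncard hpre).trans (Set.ncard_insert_le y T)
  have := hsep _ hS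
  exact ⟨π ⁻¹' T, hS, by omega, by simpa [hπ, hxy.ne] using hxT, by simpa [hπ] using hxT⟩

/-- Menger's theorem, by induction on the number of edges: either contracting an edge `xy`
keeps all separators of size `≥ k`, or there is a separator of size `k` through `x` and `y`,
and then `k` paths on either side of it in `G - xy` glue together. -/
theorem menger [Finite V] (G : SimpleGraph V) (A B : Set V) (k : ℕ)
    (hsep : ∀ S, G.Separates A B S → k ≤ S.ncard) : Nonempty (G.DisjointPaths A B k) := by
  classical
  induction hn : G.edgeSet.ncard using Nat.strong_induction_on generalizing G A B with
  | _ n ih =>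
  subst hn
  by_cases hE : G.edgeSet = ∅
  · exact DisjointPaths.nonempty_of_edgeSet_eq_empty hE hsep
  obtain ⟨e, he⟩ := Set.nonempty_iff_ne_empty.mpr hE
  induction e using Sym2.ind with
  | _ x y =>
  have hxy : G.Adj x y := he
  by_cases hcon : ∀ T, (G.map (Function.update id y x)).Separates
      (Function.update id y x '' A) (Function.update id y x '' B) T → k ≤ T.ncard
  · have hlt := ncard_edgeSet_map_lt (Function.update id y x) hxy (by simp [hxy.ne])
    obtain ⟨F⟩ := ih _ hlt _ _ _ hcon rfl
    exact F.nonempty_of_map _ (exists_walk_of_update_eq hxy)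
  push Not at hcon
  obtain ⟨T, hT, hTk⟩ := hcon
  obtain ⟨S, hS, hScard, hx, hy⟩ := exists_separates_ncard_eq_of_contract hxy hsep hT hTk
  have hlt : (G.deleteEdges {s(x, y)}).edgeSet.ncard < G.edgeSet.ncard := by
    rw [edgeSet_deleteEdges]
    exact Set.ncard_sdiff_singleton_lt_of_mem he (Set.toFinite _)
  obtain ⟨F₁⟩ := ih _ hlt _ A S (fun X hX => hsep X (hS.of_deleteEdges_left hx hy hX)) rfl
  obtain ⟨F₂⟩ := ih _ hlt _ S B (fun X hX => hsep X (hS.of_deleteEdges_right hx hy hX)) rfl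
  exact DisjointPaths.nonempty_of_separates hS hScard (F₁.mapLe (deleteEdges_le _))
    (F₂.mapLe (deleteEdges_le _))

theorem _root_.ThreeConnected.three_le_ncard_of_separates [Fintype V] (h3 : ThreeConnected G)
    {A B S : Set V} (hA : 3 ≤ A.ncard) (hB : 3 ≤ B.ncard) (hS : G.Separates A B S) :
    3 ≤ S.ncard := by
  by_contra! hlt
  obtain ⟨a, haA, haS⟩ := Set.exists_mem_notMem_of_ncard_lt_ncard (s := S) (t := A) (by omega)
  obtain ⟨b, hbB, hbS⟩ := Set.exists_mem_notMem_of_ncard_lt_ncard (s := S) (t := B) (by omega)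
  obtain ⟨w⟩ := (h3.2 S (by omega)).preconnected ⟨a, haS⟩ ⟨b, hbS⟩
  obtain ⟨z, hz, hzS⟩ := hS haA hbB (w.map (Embedding.induce Sᶜ).toHom)
  obtain ⟨⟨z, hz'⟩, -, rfl⟩ := List.mem_map.mp (Walk.support_map _ w ▸ hz)
  exact hz' hzS

namespace Walk

theorem IsCycle.three_le_ncard_support {v : V} {C : G.Walk v v} (hC : C.IsCycle) :
    3 ≤ {w | w ∈ C.support}.ncard := by
  classical
  have hset : {w | w ∈ C.support} = ↑C.support.tail.toFinset := by
    ext w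
    rw [Set.mem_ofPred_eq, Finset.mem_coe, List.mem_toFinset, mem_support_iff]
    exact ⟨fun h => h.elim (fun h => h ▸ C.end_mem_tail_support hC.not_nil) id, .inr⟩
  rw [hset, Set.ncard_coe_finset, List.toFinset_card_of_nodup hC.support_nodup,
    List.length_tail, length_support]
  have := hC.three_le_length
  omega

theorem IsCycle.exists_split {v s t : V} {C : G.Walk v v} (hC : C.IsCycle)
    (hs : s ∈ C.support) (ht : t ∈ C.support) (hst : s ≠ t) :
    ∃ p q : G.Walk s t, p.IsPath ∧ q.IsPath ∧ p.InternallyDisjoint q ∧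
      p.length + q.length = C.length ∧ p.support ⊆ C.support ∧ q.support ⊆ C.support ∧
      ∀ w ∈ C.support, w ∈ p.support ∨ w ∈ q.support := by
  classical
  have ht' : t ∈ (C.rotate s hs).support := (C.mem_support_rotate_iff s hs).mpr ht
  set p := (C.rotate s hs).takeUntil t ht'
  set r := (C.rotate s hs).dropUntil t ht'
  have hspec : p.append r = C.rotate s hs := take_spec _ ht'
  have hcyc : (p.append r).IsCycle := hspec ▸ hC.rotate hs
  have hrot : ∀ w, w ∈ (p.append r).support ↔ w ∈ C.support := fun w => by
    rw [hspec, mem_support_rotate_iff]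
  refine ⟨p, r.reverse, hcyc.isPath_of_append_left (not_nil_of_ne hst.symm),
    (hcyc.isPath_of_append_right (not_nil_of_ne hst)).reverse, fun w hwp hwq => ?_, ?_,
    fun w hw => (hrot w).mp ((mem_support_append_iff _ _).mpr (.inl hw)),
    fun w hw => (hrot w).mp ((mem_support_append_iff _ _).mpr (.inr (by simpa using hw))),
    fun w hw => ?_⟩
  · rw [support_reverse, List.mem_reverse] at hwq
    rcases (mem_support_iff p).mp hwp with rfl | hwp
    · exact .inl rfl
    rcases (mem_support_iff r).mp hwq with rfl | hwq
    · exact .inr rfl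
    have hnodup := hcyc.support_nodup
    rw [tail_support_append] at hnodup
    exact absurd hwq (List.disjoint_of_nodup_append hnodup hwp)
  · rw [length_reverse, ← length_append, hspec, length_rotate]
  · rcases (mem_support_append_iff _ _).mp ((hrot w).mpr hw) with hw | hw
    · exact .inl hw
    · exact .inr (by simpa using hw)

theorem IsCycle.exists_isPath_even_add {v b b' : V} {C : G.Walk v v} (hC : C.IsCycle)
    (hodd : Odd C.length) (hb : b ∈ C.support) (hb' : b' ∈ C.support) (hbb' : b ≠ b')
    (n : ℕ) :
    ∃ m : G.Walk b b', m.IsPath ∧ m.support ⊆ C.support ∧ Even (m.length + n) := by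
  obtain ⟨p, q, hp, hq, -, hlen, hpC, hqC, -⟩ := hC.exists_split hb hb' hbb'
  by_cases h : Even (p.length + n)
  · exact ⟨p, hp, hpC, h⟩
  · exact ⟨q, hq, hqC, by grind⟩

end Walk

def EvenPathPair (G : SimpleGraph V) (L : List V) (a b : V) : Prop :=
  ∃ r₁ r₂ : G.Walk a b, r₁.IsPath ∧ r₂.IsPath ∧ r₁.InternallyDisjoint r₂ ∧
    Even r₁.length ∧ Even r₂.length ∧ r₁.support ⊆ L ∧ r₂.support ⊆ L

theorem EvenPathPair.symm {L : List V} {a b : V} (h : G.EvenPathPair L a b) :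
    G.EvenPathPair L b a := by
  obtain ⟨r₁, r₂, h₁, h₂, hd, he₁, he₂, hs₁, hs₂⟩ := h
  exact ⟨r₁.reverse, r₂.reverse, h₁.reverse, h₂.reverse, hd.reverse, by simpa using he₁,
    by simpa using he₂, by simpa using hs₁, by simpa using hs₂⟩

/-- The two paths are `p₁` and `q` followed by `p₂` backwards. -/
theorem evenPathPair_of_append {L : List V} {a z b : V} {p₁ : G.Walk a z} {p₂ : G.Walk z b}
    {q : G.Walk a b} (hp : (p₁.append p₂).IsPath) (hq : q.IsPath)
    (hpq : (p₁.append p₂).InternallyDisjoint q) (hza : z ≠ a) (h₁ : Even p₁.length)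
    (h₂ : Even (p₂.length + q.length)) (hpL : (p₁.append p₂).support ⊆ L)
    (hqL : q.support ⊆ L) : G.EvenPathPair L a z := by
  have hp₁ : ∀ w ∈ p₁.support, w ∈ (p₁.append p₂).support := fun w hw =>
    (Walk.mem_support_append_iff _ _).mpr (.inl hw)
  have hp₂ : ∀ w ∈ p₂.support, w ∈ (p₁.append p₂).support := fun w hw =>
    (Walk.mem_support_append_iff _ _).mpr (.inr hw)
  refine ⟨p₁, q.append p₂.reverse, hp.of_append_left, hq.append hp.of_append_right.reverse ?_,
    fun w hw₁ hw₂ => ?_, h₁, by simpa [add_comm] using h₂, fun w hw => hpL (hp₁ w hw),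
    ?_⟩
  · intro w hwq hwp
    rw [Walk.support_reverse, List.mem_reverse] at hwp
    rcases hpq w (hp₂ w hwp) hwq with rfl | rfl
    · exact absurd (hp.eq_of_mem_support_append (Walk.start_mem_support _) hwp).symm hza
    · rfl
  · rcases (Walk.mem_support_append_iff _ _).mp hw₂ with hw₂ | hw₂
    · rcases hpq w (hp₁ w hw₁) hw₂ with rfl | rfl
      · exact .inl rfl
      · exact .inr (hp.eq_of_mem_support_append hw₁ (Walk.end_mem_support _))
    · rw [Walk.support_reverse, List.mem_reverse] at hw₂
      exact .inr (hp.eq_of_mem_support_append hw₁ hw₂)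
  · intro w hw
    rcases (Walk.mem_support_append_iff _ _).mp hw with hw | hw
    · exact hqL hw
    · rw [Walk.support_reverse, List.mem_reverse] at hw
      exact hpL (hp₂ w hw)

/-- Cutting the odd path `p` at `z`, one of the two pieces is even. -/
theorem evenPathPair_of_odd {L : List V} {a b z : V} {p q : G.Walk a b} (hp : p.IsPath)
    (hq : q.IsPath) (hpq : p.InternallyDisjoint q) (hpo : Odd p.length) (hqo : Odd q.length)
    (hpL : p.support ⊆ L) (hqL : q.support ⊆ L) (hz : z ∈ p.support) (hza : z ≠ a)
    (hzb : z ≠ b) : G.EvenPathPair L a z ∨ G.EvenPathPair L z b := by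
  classical
  have hspec := p.take_spec hz
  set p₁ := p.takeUntil z hz
  set p₂ := p.dropUntil z hz
  have hlen : p₁.length + p₂.length = p.length := by rw [← Walk.length_append, hspec]
  rw [← hspec] at hp hpq hpL
  rcases Nat.even_or_odd p₁.length with h₁ | h₁
  · exact .inl (evenPathPair_of_append hp hq hpq hza h₁ (by grind) hpL hqL)
  refine .inr (EvenPathPair.symm (evenPathPair_of_append (p₁ := p₂.reverse)
    (p₂ := p₁.reverse) (q := q.reverse)
    (by rwa [← Walk.reverse_append, Walk.isPath_reverse_iff]) hq.reverse
    (by simpa [← Walk.reverse_append] using hpq.reverse) hzb ?_ ?_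
    (by simpa [← Walk.reverse_append] using hpL) (by simpa using hqL)))
  · rw [Walk.length_reverse]
    grind
  · rw [Walk.length_reverse, Walk.length_reverse]
    grind

theorem Walk.IsCycle.exists_evenPathPair {v : V} {C : G.Walk v v} (hC : C.IsCycle)
    (hev : Even C.length) (u : Fin 3 → V) (hu : ∀ i, u i ∈ C.support)
    (hinj : Function.Injective u) : ∃ i j, i ≠ j ∧ G.EvenPathPair C.support (u i) (u j) := by
  have hne : ∀ i j, i ≠ j → u i ≠ u j := fun i j h => hinj.ne h
  obtain ⟨p, q, hp, hq, hpq, hlen, hpC, hqC, hcov⟩ :=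
    hC.exists_split (hu 0) (hu 1) (hne 0 1 (by decide))
  by_cases hpe : Even p.length
  · exact ⟨0, 1, by decide, p, q, hp, hq, hpq, hpe, by grind, hpC, hqC⟩
  have hpo : Odd p.length := Nat.not_even_iff_odd.mp hpe
  have hqo : Odd q.length := by grind
  have h20 := hne 2 0 (by decide)
  have h21 := hne 2 1 (by decide)
  rcases hcov _ (hu 2) with h2 | h2
  · rcases evenPathPair_of_odd hp hq hpq hpo hqo hpC hqC h2 h20 h21 with h | h
    exacts [⟨0, 2, by decide, h⟩, ⟨2, 1, by decide, h⟩]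
  · rcases evenPathPair_of_odd hq hp hpq.symm hqo hpo hqC hpC h2 h20 h21 with h | h
    exacts [⟨0, 2, by decide, h⟩, ⟨2, 1, by decide, h⟩]

/-- The path runs along `P`, then along whichever arc of `C` between the ends of `P` and `P'`
gives it even length, then back along `P'`. -/
theorem exists_even_path_via_odd_cycle {v s t b b' : V} {C : G.Walk v v} (hC : C.IsCycle)
    (hodd : Odd C.length) {P : G.Walk s b} {P' : G.Walk t b'} (hP : P.IsPath)
    (hP' : P'.IsPath) (hb : b ∈ C.support) (hb' : b' ∈ C.support)
    (hPC : ∀ w ∈ P.support, w ∈ C.support → w = b)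
    (hP'C : ∀ w ∈ P'.support, w ∈ C.support → w = b')
    (hPP' : ∀ w ∈ P.support, w ∉ P'.support) :
    ∃ r : G.Walk s t, r.IsPath ∧ Even r.length ∧
      ∀ w ∈ r.support, w ∈ P.support ∨ w ∈ C.support ∨ w ∈ P'.support := by
  have hbb' : b ≠ b' := fun h => hPP' b P.end_mem_support (h ▸ P'.end_mem_support)
  obtain ⟨m, hm, hmC, hev⟩ := hC.exists_isPath_even_add hodd hb hb' hbb' (P.length + P'.length)
  refine ⟨P.append (m.append P'.reverse), hP.append (hm.append hP'.reverse ?_) ?_, ?_, ?_⟩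
  · intro z hzm hzP'
    exact hP'C z (by simpa using hzP') (hmC hzm)
  · intro z hzP hz
    rcases (Walk.mem_support_append_iff _ _).mp hz with hz | hz
    · exact hPC z hzP (hmC hz)
    · exact absurd (by simpa using hz) (hPP' z hzP)
  · simp only [Walk.length_append, Walk.length_reverse]
    grind
  · intro w hw
    simp only [Walk.mem_support_append_iff, Walk.support_reverse, List.mem_reverse] at hw
    rcases hw with hw | hw | hw
    exacts [.inl hw, .inr (.inl (hmC hw)), .inr (.inr hw)]

section Bipartite

variable {α β : Type*}

def bipartiteWalks (f : α ⊕ β ↪ V) (P : ∀ i j, G.Walk (f (.inl i)) (f (.inr j))) :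
    ∀ a b, (completeBipartiteGraph α β).Adj a b → G.Walk (f a) (f b)
  | .inl i, .inr j, _ => P i j
  | .inr j, .inl i, _ => (P i j).reverse
  | .inl _, .inl _, h => absurd h (by simp)
  | .inr _, .inr _, h => absurd h (by simp)

theorem exists_bipartiteWalks_eq (f : α ⊕ β ↪ V)
    (P : ∀ i j, G.Walk (f (.inl i)) (f (.inr j))) (a b : α ⊕ β)
    (hab : (completeBipartiteGraph α β).Adj a b) :
    ∃ i j, s(a, b) = s(.inl i, .inr j) ∧
      ((bipartiteWalks f P a b hab).IsPath ↔ (P i j).IsPath) ∧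
      (bipartiteWalks f P a b hab).length = (P i j).length ∧
      ∀ w, w ∈ (bipartiteWalks f P a b hab).support ↔ w ∈ (P i j).support := by
  rcases a with i | j <;> rcases b with i' | j'
  · simp at hab
  · exact ⟨i, j', rfl, .rfl, rfl, fun w => .rfl⟩
  · exact ⟨i', j, Sym2.eq_swap, by simp [bipartiteWalks], by simp [bipartiteWalks],
      by simp [bipartiteWalks]⟩
  · simp at hab

theorem isBasedOn_completeBipartiteGraph (f : α ⊕ β ↪ V)
    (P : ∀ i j, G.Walk (f (.inl i)) (f (.inr j))) (hpath : ∀ i j, (P i j).IsPath)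
    (hodd : ∀ i j, Odd (P i j).length)
    (hbranch : ∀ i j c, f c ∈ (P i j).support → c = .inl i ∨ c = .inr j)
    (hinner : ∀ i j i' j', (i, j) ≠ (i', j') →
      ∀ w ∈ (P i j).support, w ∈ (P i' j').support → w ∈ Set.range f) :
    IsBasedOn G (completeBipartiteGraph α β) := by
  have hends : ∀ a b hab c, f c ∈ (bipartiteWalks f P a b hab).support → c ∈ s(a, b) := by
    intro a b hab c hc
    obtain ⟨i, j, he, -, -, hs⟩ := exists_bipartiteWalks_eq f P a b hab
    rw [he, Sym2.mem_iff]
    exact hbranch i j c ((hs _).mp hc)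
  refine ⟨f, bipartiteWalks f P, fun a b hab => ?_, fun a b hab => ?_,
    fun a b hab c hc => Sym2.mem_iff.mp (hends a b hab c hc), ?_⟩
  · obtain ⟨i, j, -, h, -⟩ := exists_bipartiteWalks_eq f P a b hab
    exact h.mpr (hpath i j)
  · obtain ⟨i, j, -, -, h, -⟩ := exists_bipartiteWalks_eq f P a b hab
    exact h ▸ hodd i j
  intro a b hab a' b' hab' hne w hw hw'
  obtain ⟨i, j, he, -, -, hs⟩ := exists_bipartiteWalks_eq f P a b hab
  obtain ⟨i', j', he', -, -, hs'⟩ := exists_bipartiteWalks_eq f P a' b' hab'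
  have hij : (i, j) ≠ (i', j') := by
    rintro ⟨⟩
    exact hne (he.trans he'.symm)
  obtain ⟨c, rfl⟩ := hinner i j i' j' hij w ((hs w).mp hw) ((hs' w).mp hw')
  constructor
  · rcases Sym2.mem_iff.mp (hends a b hab c hw) with rfl | rfl <;> simp
  · rcases Sym2.mem_iff.mp (hends a' b' hab' c hw') with rfl | rfl <;> simp

theorem injective_sumElim_pair {s t : V} {v : β → V} (hst : s ≠ t) (hv : Function.Injective v)
    (hvs : ∀ j, v j ≠ s) (hvt : ∀ j, v j ≠ t) :
    Function.Injective (Sum.elim ![s, t] v) := by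
  refine Function.Injective.sumElim (fun a b h => ?_) hv (fun a j => ?_)
  · fin_cases a <;> fin_cases b
    exacts [rfl, absurd h hst, absurd h.symm hst, rfl]
  · fin_cases a
    exacts [(hvs j).symm, (hvt j).symm]

/-- The branch vertices are `s`, `t` on one side and the `v j` on the other. -/
theorem isBasedOn_of_odd_paths {s t : V} (hst : s ≠ t) (v : β → V)
    (hadj : ∀ j, G.Adj s (v j)) (q : ∀ j, G.Walk (v j) t) (hpath : ∀ j, (q j).IsPath)
    (hodd : ∀ j, Odd (q j).length)
    (hs : ∀ j, s ∉ (q j).support)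
    (hdisj : Pairwise fun j j' => ∀ w ∈ (q j).support, w ∈ (q j').support → w = t) :
    IsBasedOn G (completeBipartiteGraph (Fin 2) β) := by
  have hvt : ∀ j, v j ≠ t := fun j h => by
    have hnil := (hpath j).nil_iff_eq.mpr h
    simpa [Walk.length_eq_zero_iff.mpr hnil] using hodd j
  have hvuniq : ∀ j k, v k ∈ (q j).support → k = j := fun j k hk => by
    by_contra hkj
    exact hvt k (hdisj hkj _ (q k).start_mem_support hk)
  let f : Fin 2 ⊕ β ↪ V := ⟨_, injective_sumElim_pair hst
    (fun j k (h : v j = v k) => (hvuniq j k (h ▸ (q j).start_mem_support)).symm)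
    (fun j => (hadj j).ne.symm)
    hvt⟩
  let P : ∀ i j, G.Walk (f (.inl i)) (f (.inr j))
    | 0, j => Walk.cons (hadj j) Walk.nil
    | 1, j => (q j).reverse
  have hP0 : ∀ j w, w ∈ (P 0 j).support ↔ w = f (.inl 0) ∨ w = f (.inr j) := fun j w => by
    simp [P, f]
  have hP1 : ∀ j w, w ∈ (P 1 j).support ↔ w ∈ (q j).support := fun j w => by
    show w ∈ (q j).reverse.support ↔ _
    rw [Walk.support_reverse, List.mem_reverse]
  refine isBasedOn_completeBipartiteGraph f P (fun i j => ?_) (fun i j => ?_)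
    (fun i j c hc => ?_) (fun i j i' j' hne w hw hw' => ?_)
  · fin_cases i
    · show (Walk.cons (hadj j) Walk.nil).IsPath
      exact (Walk.cons_isPath_iff _ _).mpr ⟨Walk.IsPath.nil, by simpa using (hadj j).ne⟩
    · exact (hpath j).reverse
  · fin_cases i
    · exact odd_one
    · exact (Walk.length_reverse _).symm ▸ hodd j
  · fin_cases i
    · rcases (hP0 j _).mp hc with h | h
      exacts [.inl (f.injective h), .inr (f.injective h)]
    rw [hP1] at hc
    rcases c with c | k
    · fin_cases c
      exacts [absurd hc (hs j), .inl rfl]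
    · exact .inr (congrArg _ (hvuniq j k hc))
  · have hP0f : ∀ j w, w ∈ (P 0 j).support → w ∈ Set.range f := fun j w hw => by
      rcases (hP0 j w).mp hw with h | h
      exacts [⟨_, h.symm⟩, ⟨_, h.symm⟩]
    fin_cases i
    · exact hP0f j w hw
    fin_cases i'
    · exact hP0f j' w hw'
    rw [hP1] at hw hw'
    exact ⟨.inl 1, (hdisj (fun h => hne (by rw [h])) w hw hw').symm⟩

theorem isBasedOn_of_even_paths {s t : V} (hst : s ≠ t) (p : β → G.Walk s t)
    (hpath : ∀ j, (p j).IsPath) (heven : ∀ j, Even (p j).length)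
    (hdisj : Pairwise fun j j' => (p j).InternallyDisjoint (p j')) :
    IsBasedOn G (completeBipartiteGraph (Fin 2) β) := by
  have hnil : ∀ j, ¬ (p j).Nil := fun j => Walk.not_nil_of_ne hst
  have hsupp : ∀ j, (p j).support = s :: (p j).tail.support := fun j =>
    (Walk.cons_support_tail (hnil j)).symm
  have hs : ∀ j, s ∉ (p j).tail.support := fun j => by
    have := (hpath j).support_nodup
    rw [hsupp j] at this
    exact (List.nodup_cons.mp this).1
  refine isBasedOn_of_odd_paths hst (fun j => (p j).snd) (fun j => (p j).adj_snd (hnil j))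
    (fun j => (p j).tail) (fun j => (hpath j).tail) (fun j => ?_) hs ?_
  · have := Walk.not_nil_iff_lt_length.mp (hnil j)
    rw [Walk.length_tail]
    grind
  · intro j j' hjj' w hw hw'
    have hmem : ∀ j, w ∈ (p j).tail.support → w ∈ (p j).support := fun j h => by
      rw [hsupp]
      exact List.mem_cons_of_mem _ h
    rcases hdisj hjj' w (hmem j hw) (hmem j' hw') with rfl | rfl
    exacts [absurd hw (hs j), rfl]

end Bipartite

end SimpleGraph

/-- If a 3-connected graph contains a mixed bicycle, then it is
`K₂,₃`-based. -/
theorem threeConnected_mixedBicycle_K23Based [Fintype V] (G : SimpleGraph V)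
    (h3 : ThreeConnected G) (hmb : HasMixedBicycle G) :
    K23Based G := by
  obtain ⟨u, v, Qo, Qe, hQo, hQe, hodd, heven, -, hdisj⟩ := hmb
  obtain ⟨F⟩ := menger G {w | w ∈ Qe.support} {w | w ∈ Qo.support} 3 fun S hS =>
    h3.three_le_ncard_of_separates hQe.three_le_ncard_support hQo.three_le_ncard_support hS
  obtain ⟨F, hF⟩ := F.exists_meeting_ends_only
  obtain ⟨i, j, hij, p₁, p₂, hp₁, hp₂, hp₁₂, he₁, he₂, hs₁, hs₂⟩ :=
    hQe.exists_evenPathPair heven F.src F.src_mem F.src_injective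
  obtain ⟨r, hr, her, hrs⟩ := exists_even_path_via_odd_cycle hQo hodd (F.isPath i)
    (F.isPath j) (F.dst_mem i) (F.dst_mem j) (fun w hw => (hF i w hw).2)
    (fun w hw => (hF j w hw).2) (F.disjoint hij)
  have hr_disj : ∀ q : G.Walk (F.src i) (F.src j), q.support ⊆ Qe.support →
      q.InternallyDisjoint r := by
    intro q hq w hwq hwr
    rcases hrs w hwr with h | h | h
    · exact .inl ((hF i w h).1 (hq hwq))
    · exact absurd (hq hwq) (hdisj w h)
    · exact .inr ((hF j w h).1 (hq hwq))
  refine isBasedOn_of_even_paths (F.src_injective.ne hij) ![p₁, p₂, r]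
    (fun k => by fin_cases k <;> assumption) (fun k => by fin_cases k <;> assumption) ?_
  intro k k' hkk'
  fin_cases k <;> fin_cases k'
  exacts [absurd rfl hkk', hp₁₂, hr_disj _ hs₁, hp₁₂.symm, absurd rfl hkk',
    hr_disj _ hs₂, (hr_disj _ hs₁).symm, (hr_disj _ hs₂).symm, absurd rfl hkk']
end

section
/- Every odd wheel is cycle-extendable; that is, for every k ≥ 1, the graph obtained from an odd cycle u_0 u_1 … u_{2k} (the rim) by adding a new vertex h (the hub) adjacent to every rim vertex is a matching covered graph in which every even cycle is conformal. -/
/-! For a rim vertex `c`, the spoke from the hub to `c` together with the consecutive pairs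
`{c+1, c+2}, …, {c+2k-1, c+2k}` is a perfect matching, and every spoke and every rim edge
lies in one of these. A walk along the rim cannot turn back without repeating a vertex, so
the rim part of a cycle is an arc. Hence a cycle avoiding the hub is the whole rim, of odd
length `2k+1`, and an even cycle passes through the hub and covers an arc of odd length; the
complementary arc has an even number of vertices and is matched by consecutive pairs. -/

open SimpleGraph

variable {V : Type*}

/-- The odd wheel `W_{2k+1}`: an odd cycle `u_0 u_1 … u_{2k}` (the rim, with vertices
`some i`) together with a hub (the vertex `none`) joined to every rim vertex. -/
def oddWheel (k : ℕ) : SimpleGraph (Option (ZMod (2 * k + 1))) where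
  Adj a b :=
    (a = none ∧ b ≠ none) ∨ (b = none ∧ a ≠ none) ∨
    (∃ i j : ZMod (2 * k + 1), a = some i ∧ b = some j ∧ i ≠ j ∧ (i - j = 1 ∨ j - i = 1))
  symm := by
    constructor
    rintro a b (⟨h1, h2⟩ | ⟨h1, h2⟩ | ⟨i, j, h1, h2, h3, h4⟩)
    · exact Or.inr (Or.inl ⟨h1, h2⟩)
    · exact Or.inl ⟨h1, h2⟩
    · exact Or.inr (Or.inr ⟨j, i, h2, h1, h3.symm, h4.symm⟩)
  loopless := by
    constructor
    rintro a (⟨h1, h2⟩ | ⟨h1, h2⟩ | ⟨i, j, h1, h2, h3, h4⟩)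
    · exact h2 h1
    · exact h2 h1
    · rw [h1] at h2; exact h3 (Option.some_injective _ h2.symm).symm

/-- The odd prism: two disjoint odd cycles `w_0 w_1 … w_{2k}` (vertices `(false, i)`) and
`z_0 z_1 … z_{2k}` (vertices `(true, i)`) together with the rungs `w_i z_i`. -/
def oddPrism (k : ℕ) : SimpleGraph (Bool × ZMod (2 * k + 1)) where
  Adj a b :=
    (a.1 = b.1 ∧ a.2 ≠ b.2 ∧ (a.2 - b.2 = 1 ∨ b.2 - a.2 = 1)) ∨ (a.1 ≠ b.1 ∧ a.2 = b.2)
  symm := by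
    constructor
    rintro a b (⟨h1, h2, h3⟩ | ⟨h1, h2⟩)
    · exact Or.inl ⟨h1.symm, h2.symm, h3.symm⟩
    · exact Or.inr ⟨h1.symm, h2.symm⟩
  loopless := by
    constructor
    rintro a (⟨h1, h2, h3⟩ | ⟨h1, h2⟩)
    · exact h2 rfl
    · exact h1 rfl

theorem exists_forall_eq_add_nsmul {G : Type*} [AddCommGroup G] {x : ℕ → G} {d : G} {N : ℕ}
    (hstep : ∀ j < N, x (j + 1) - x j = d ∨ x (j + 1) - x j = -d)
    (hback : ∀ j, j + 2 ≤ N → x (j + 2) ≠ x j) :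
    ∃ ε, (ε = d ∨ ε = -d) ∧ ∀ j ≤ N, x j = x 0 + j • ε := by
  rcases Nat.eq_zero_or_pos N with rfl | hN
  · exact ⟨d, Or.inl rfl, fun j hj => by simp [Nat.le_zero.mp hj]⟩
  have hconst : ∀ j < N, x (j + 1) - x j = x 1 - x 0 := by
    intro j hj
    induction j with
    | zero => rfl
    | succ j ih =>
      rw [← ih (by omega)]
      have hsum : x (j + 2) - x j = (x (j + 1 + 1) - x (j + 1)) + (x (j + 1) - x j) := by abel
      have hne := sub_ne_zero.mpr (hback j (by omega))
      -- a step opposite to the previous one would return to `x j`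
      rcases hstep (j + 1) hj with h1 | h1 <;> rcases hstep j (by omega) with h0 | h0 <;>
        simp_all
  refine ⟨x 1 - x 0, hstep 0 hN, fun j hj => ?_⟩
  induction j with
  | zero => simp
  | succ j ih =>
    rw [succ_nsmul, ← add_assoc, ← ih (by omega), ← hconst j (by omega), add_sub_cancel]

namespace ZMod

variable {n : ℕ}

def arc (c ε : ZMod n) (m : ℕ) : Set (ZMod n) := {i | ∃ j < m, i = c + j * ε}

theorem arc_zero (c ε : ZMod n) : arc c ε 0 = ∅ := by
  simp [arc]

theorem arc_succ (c ε : ZMod n) (m : ℕ) :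
    arc c ε (m + 1) = insert (c + (m : ZMod n) * ε) (arc c ε m) := by
  ext i
  simp only [arc, Nat.lt_succ_iff_lt_or_eq, Set.mem_insert_iff, Set.mem_ofPred_eq]
  grind

theorem arc_one (c ε : ZMod n) : arc c ε 1 = {c} := by
  simp [arc_succ, arc_zero]

theorem eq_of_natCast_mul_eq_natCast_mul {ε : ZMod n} (hε : IsUnit ε) {j j' : ℕ}
    (hj : j < n) (hj' : j' < n) (h : (j : ZMod n) * ε = j' * ε) : j = j' := by
  simpa [val_cast_of_lt hj, val_cast_of_lt hj'] using congrArg val (hε.mul_left_injective h)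

theorem exists_lt_eq_add_natCast_mul [NeZero n] {ε : ZMod n} (hε : IsUnit ε) (c i : ZMod n) :
    ∃ j < n, i = c + j * ε := by
  obtain ⟨u, rfl⟩ := hε
  refine ⟨((i - c) * ↑u⁻¹).val, val_lt _, ?_⟩
  rw [natCast_zmod_val, Units.inv_mul_cancel_right, add_sub_cancel]

theorem add_natCast_mul_notMem_arc {ε : ZMod n} (hε : IsUnit ε) (c : ZMod n) {j m : ℕ}
    (hmj : m ≤ j) (hj : j < n) : c + j * ε ∉ arc c ε m := by
  rintro ⟨j', hj', h⟩
  have := eq_of_natCast_mul_eq_natCast_mul hε hj (by omega) (add_left_cancel h)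
  omega

theorem compl_arc [NeZero n] {ε : ZMod n} (hε : IsUnit ε) (c : ZMod n) {m : ℕ} (hm : m ≤ n) :
    (arc c ε m)ᶜ = arc (c + (m : ZMod n) * ε) ε (n - m) := by
  ext i
  constructor
  · intro hi
    obtain ⟨j, hj, rfl⟩ := exists_lt_eq_add_natCast_mul hε c i
    have hmj : m ≤ j := by
      by_contra! hjm
      exact hi ⟨j, hjm, rfl⟩
    exact ⟨j - m, by omega, by rw [Nat.cast_sub hmj]; ring⟩
  · rintro ⟨j, hj, rfl⟩
    have := add_natCast_mul_notMem_arc hε c (le_self_add : m ≤ m + j) (by omega)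
    rwa [Nat.cast_add, add_mul, ← add_assoc] at this

end ZMod

theorem conformalCycle_rotate_iff [DecidableEq V] {G : SimpleGraph V} {u v : V}
    (C : G.Walk v v) (h : u ∈ C.support) :
    ConformalCycle G (C.rotate u h) ↔ ConformalCycle G C := by
  simp only [ConformalCycle, Walk.mem_support_rotate_iff]

namespace oddWheel

variable {k : ℕ}

theorem adj_none_some (i : ZMod (2 * k + 1)) : (oddWheel k).Adj none (some i) :=
  Or.inl ⟨rfl, Option.some_ne_none i⟩

theorem adj_some_some {i j : ZMod (2 * k + 1)} :
    (oddWheel k).Adj (some i) (some j) ↔ i ≠ j ∧ (i - j = 1 ∨ j - i = 1) := by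
  simp [oddWheel]

theorem sub_eq_one_or_neg_one_of_adj {i j : ZMod (2 * k + 1)}
    (h : (oddWheel k).Adj (some i) (some j)) : j - i = 1 ∨ j - i = -1 := by
  obtain ⟨-, h | h⟩ := adj_some_some.mp h
  · exact Or.inr (by rw [← h, neg_sub])
  · exact Or.inl h

theorem adj_some_add (hk : k ≠ 0) (i : ZMod (2 * k + 1)) {ε : ZMod (2 * k + 1)}
    (hε : ε = 1 ∨ ε = -1) : (oddWheel k).Adj (some i) (some (i + ε)) := by
  have : Fact (1 < 2 * k + 1) := ⟨by omega⟩
  rcases hε with rfl | rfl <;> simp [adj_some_some]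

theorem connected : (oddWheel k).Connected :=
  (oddWheel k).connected_iff_exists_forall_reachable.mpr ⟨none, fun
    | none => .refl _
    | some i => (adj_none_some i).reachable⟩

theorem exists_eq_some_add_mul {v : ℕ → Option (ZMod (2 * k + 1))} {N : ℕ}
    (hadj : ∀ j < N, (oddWheel k).Adj (v j) (v (j + 1)))
    (hrim : ∀ j ≤ N, v j ≠ none) (hback : ∀ j, j + 2 ≤ N → v (j + 2) ≠ v j) :
    ∃ b ε : ZMod (2 * k + 1), (ε = 1 ∨ ε = -1) ∧ ∀ j ≤ N, v j = some (b + j * ε) := by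
  set x := fun j => (v j).getD 0
  have hx : ∀ j ≤ N, v j = some (x j) := fun j hj => (Option.getD_of_ne_none (hrim j hj) 0).symm
  obtain ⟨ε, hε, h⟩ := exists_forall_eq_add_nsmul (x := x) (d := 1) (N := N)
    (fun j hj => sub_eq_one_or_neg_one_of_adj (hx j hj.le ▸ hx (j + 1) hj ▸ hadj j hj))
    (fun j hj h => hback j hj (by rw [hx _ hj, hx j (by omega), h]))
  exact ⟨x 0, ε, hε, fun j hj => by rw [hx j hj, h j hj, nsmul_eq_mul]⟩

theorem lt_of_injOn_eq_some_add_mul {v : ℕ → Option (ZMod (2 * k + 1))} {N : ℕ}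
    {b ε : ZMod (2 * k + 1)} (hv : ∀ j ≤ N, v j = some (b + j * ε))
    (hinj : Set.InjOn v (Set.Iic N)) : N < 2 * k + 1 := by
  by_contra! h
  have := hinj (show 2 * k + 1 ∈ Set.Iic N from h) (show 0 ∈ Set.Iic N from Nat.zero_le _)
    (by rw [hv _ h, hv 0 (Nat.zero_le _), ZMod.natCast_self]; simp)
  omega

theorem none_mem_support_of_isCycle {u : Option (ZMod (2 * k + 1))} {C : (oddWheel k).Walk u u}
    (hC : C.IsCycle) (he : Even C.length) : none ∈ C.support := by
  by_contra hnone
  have h3 := hC.three_le_length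
  obtain ⟨b, ε, hε, hv⟩ := exists_eq_some_add_mul (v := C.getVert) (N := C.length)
    (fun j hj => C.adj_getVert_succ hj)
    (fun j _ h => hnone (h ▸ C.getVert_mem_support j))
    (fun j hj => (hC.getVert_sub_one_ne_getVert_add_one (i := j + 1) (by omega)).symm)
  have hle : C.length - 1 < 2 * k + 1 :=
    lt_of_injOn_eq_some_add_mul (fun j hj => hv j (by omega)) hC.getVert_injOn'
  have hdvd : 2 * k + 1 ∣ C.length := by
    have h : C.getVert C.length = C.getVert 0 := by rw [C.getVert_length, C.getVert_zero]
    rw [hv _ le_rfl, hv 0 (Nat.zero_le _), Option.some_inj] at h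
    rw [← ZMod.natCast_eq_zero_iff]
    rcases hε with rfl | rfl <;> simpa using h
  obtain ⟨r, hr⟩ := he
  have := Nat.le_of_dvd (by omega) hdvd
  omega

theorem exists_arc_of_isCycle {C : (oddWheel k).Walk none none} (hC : C.IsCycle) :
    ∃ b ε : ZMod (2 * k + 1), (ε = 1 ∨ ε = -1) ∧ C.length - 2 < 2 * k + 1 ∧
      ∀ i, some i ∈ C.support ↔ i ∈ ZMod.arc b ε (C.length - 1) := by
  have h3 := hC.three_le_length
  obtain ⟨b, ε, hε, hv⟩ := exists_eq_some_add_mul (v := fun j => C.getVert (j + 1))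
    (N := C.length - 2) (fun j hj => C.adj_getVert_succ (by omega))
    (fun j hj h => by have := (hC.getVert_endpoint_iff (i := j + 1) (by omega)).mp h; omega)
    (fun j hj => (hC.getVert_sub_one_ne_getVert_add_one (i := j + 2) (by omega)).symm)
  refine ⟨b, ε, hε, lt_of_injOn_eq_some_add_mul hv fun j hj j' hj' h => ?_, fun i => ?_⟩
  · have hj := Set.mem_Iic.mp hj
    have hj' := Set.mem_Iic.mp hj'
    have := hC.getVert_injOn (x₁ := j + 1) (x₂ := j' + 1) ⟨by omega, by omega⟩
      ⟨by omega, by omega⟩ h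
    omega
  rw [Walk.mem_support_iff_exists_getVert]
  constructor
  · rintro ⟨_ | j, hj, hjl⟩
    · simp at hj
    have hjN : j ≤ C.length - 2 := by
      by_contra! hlt
      rw [show j + 1 = C.length by omega, Walk.getVert_length] at hj
      simp at hj
    exact ⟨j, by omega, (Option.some_injective _ ((hv j hjN).symm.trans hj)).symm⟩
  · rintro ⟨j, hj, rfl⟩
    exact ⟨j + 1, hv j (by omega), by omega⟩

theorem exists_isMatching_verts_eq_arc (c : ZMod (2 * k + 1)) {ε : ZMod (2 * k + 1)}
    (hε : ε = 1 ∨ ε = -1) (m : ℕ) (hm : 2 * m ≤ 2 * k + 1) :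
    ∃ M : (oddWheel k).Subgraph, M.IsMatching ∧ M.verts = some '' ZMod.arc c ε (2 * m) ∧
      (m ≠ 0 → M.Adj (some c) (some (c + ε))) := by
  induction m with
  | zero => exact ⟨⊥, fun _ hv => hv.elim, by simp [ZMod.arc_zero], by simp⟩
  | succ m ih =>
    obtain ⟨M, hM, hverts, hadj⟩ := ih (by omega)
    have hunit : IsUnit ε := by rcases hε with rfl | rfl <;> simp
    set x := c + ((2 * m : ℕ) : ZMod (2 * k + 1)) * ε
    have hx : x + ε = c + ((2 * m + 1 : ℕ) : ZMod (2 * k + 1)) * ε := by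
      simp only [x]; push_cast; ring
    have hxy := adj_some_add (by omega) x hε
    refine ⟨M ⊔ (oddWheel k).subgraphOfAdj hxy, hM.sup (.subgraphOfAdj hxy) ?_, ?_,
      fun _ => ?_⟩
    · rw [hM.support_eq_verts, support_subgraphOfAdj, hverts, hx]
      have h0 : x ∉ ZMod.arc c ε (2 * m) :=
        ZMod.add_natCast_mul_notMem_arc hunit c le_rfl (by omega)
      have h1 : c + ((2 * m + 1 : ℕ) : ZMod (2 * k + 1)) * ε ∉ ZMod.arc c ε (2 * m) :=
        ZMod.add_natCast_mul_notMem_arc hunit c (by omega) (by omega)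
      simp only [Set.disjoint_insert_right, Set.disjoint_singleton_right, Set.mem_image,
        Option.some_inj, exists_eq_right]
      exact ⟨h0, h1⟩
    · rw [Subgraph.verts_sup, subgraphOfAdj_verts, hverts, hx,
        show 2 * (m + 1) = 2 * m + 1 + 1 by ring, ZMod.arc_succ, ZMod.arc_succ,
        Set.image_insert_eq, Set.image_insert_eq]
      ext w
      simp only [Set.mem_union, Set.mem_insert_iff, Set.mem_singleton_iff]
      tauto
    · rcases Nat.eq_zero_or_pos m with rfl | hm0
      · exact Or.inr (by simp [x])
      · exact Or.inl (hadj hm0.ne')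

theorem exists_isPerfectMatching_adj_none (c : ZMod (2 * k + 1)) :
    ∃ M : (oddWheel k).Subgraph, M.IsPerfectMatching ∧ M.Adj none (some c) ∧
      (k ≠ 0 → M.Adj (some (c + 1)) (some (c + 1 + 1))) := by
  obtain ⟨M, hM, hverts, hadj⟩ :=
    exists_isMatching_verts_eq_arc (c + 1) (Or.inl rfl) k (by omega)
  have hrim : ZMod.arc (c + 1) 1 (2 * k) = {c}ᶜ := by
    rw [← ZMod.arc_one c 1, ZMod.compl_arc isUnit_one c (by omega)]
    simp
  have hspoke := adj_none_some c
  refine ⟨(oddWheel k).subgraphOfAdj hspoke ⊔ M,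
    ⟨(Subgraph.IsMatching.subgraphOfAdj hspoke).sup hM ?_, fun w => ?_⟩,
    Or.inl (by simp), fun hk => Or.inr (hadj hk)⟩
  · rw [hM.support_eq_verts, support_subgraphOfAdj, hverts, hrim]
    simp [Set.disjoint_left]
  · rw [Subgraph.verts_sup, subgraphOfAdj_verts, hverts, hrim]
    rcases w with _ | i
    · simp
    · by_cases hi : i = c <;> simp [hi]

theorem exists_isPerfectMatching_mem_edgeSet {e : Sym2 (Option (ZMod (2 * k + 1)))}
    (he : e ∈ (oddWheel k).edgeSet) :
    ∃ M : (oddWheel k).Subgraph, M.IsPerfectMatching ∧ e ∈ M.edgeSet := by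
  induction e using Sym2.ind with | _ x y => ?_
  rcases x with _ | i <;> rcases y with _ | j
  · exact absurd he (by simp)
  · obtain ⟨M, hM, hadj, -⟩ := exists_isPerfectMatching_adj_none (k := k) j
    exact ⟨M, hM, hadj⟩
  · obtain ⟨M, hM, hadj, -⟩ := exists_isPerfectMatching_adj_none (k := k) i
    exact ⟨M, hM, hadj.symm⟩
  obtain ⟨hij, hd⟩ := adj_some_some.mp he
  have hk : k ≠ 0 := by
    rintro rfl
    exact hij (Subsingleton.elim (α := ZMod 1) _ _)
  have hrim : ∀ a, ∃ M : (oddWheel k).Subgraph,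
      M.IsPerfectMatching ∧ M.Adj (some a) (some (a + 1)) := by
    intro a
    obtain ⟨M, hM, -, hadj⟩ := exists_isPerfectMatching_adj_none (a - 1)
    exact ⟨M, hM, by simpa using hadj hk⟩
  rcases hd with hd | hd
  · obtain ⟨M, hM, hadj⟩ := hrim j
    exact ⟨M, hM, by rw [eq_add_of_sub_eq' hd]; exact hadj.symm⟩
  · obtain ⟨M, hM, hadj⟩ := hrim i
    exact ⟨M, hM, by rw [eq_add_of_sub_eq' hd]; exact hadj⟩

theorem conformalCycle_of_isCycle {C : (oddWheel k).Walk none none} (hC : C.IsCycle)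
    (he : Even C.length) : ConformalCycle (oddWheel k) C := by
  obtain ⟨b, ε, hε, hlt, hsupp⟩ := exists_arc_of_isCycle hC
  have h3 := hC.three_le_length
  obtain ⟨m, hm⟩ : ∃ m, 2 * k + 1 - (C.length - 1) = 2 * m := by
    obtain ⟨r, hr⟩ := he
    exact ⟨k + 1 - r, by omega⟩
  obtain ⟨M, hM, hverts, -⟩ := exists_isMatching_verts_eq_arc
    (b + ((C.length - 1 : ℕ) : ZMod (2 * k + 1)) * ε) hε m (by omega)
  refine ⟨M, hM, ?_⟩
  have hunit : IsUnit ε := by rcases hε with rfl | rfl <;> simp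
  rw [hverts, ← hm, ← ZMod.compl_arc hunit b (by omega)]
  ext (_ | i)
  · simp [C.start_mem_support]
  · simp [hsupp]

end oddWheel

theorem oddWheel_matchingCovered_and_cycleExtendable_general (k : ℕ) :
    MatchingCovered (oddWheel k) ∧ CycleExtendable (oddWheel k) := by
  refine ⟨⟨oddWheel.connected, inferInstance, fun e he =>
    oddWheel.exists_isPerfectMatching_mem_edgeSet he⟩, fun u C hC he => ?_⟩
  have hnone := oddWheel.none_mem_support_of_isCycle hC he
  rw [← conformalCycle_rotate_iff C hnone]
  exact oddWheel.conformalCycle_of_isCycle (hC.rotate hnone) (by rwa [Walk.length_rotate])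

/-- Every odd wheel is cycle-extendable: for every `k ≥ 1`, the odd
wheel `W_{2k+1}` is a matching covered graph in which every even cycle is conformal. -/
theorem oddWheel_matchingCovered_and_cycleExtendable (k : ℕ) (hk : 1 ≤ k) :
    MatchingCovered (oddWheel k) ∧ CycleExtendable (oddWheel k) :=
  oddWheel_matchingCovered_and_cycleExtendable_general k
end

section
/- Every odd prism is cycle-extendable; that is, for every k ≥ 1, the graph obtained from two disjoint odd cycles w_0 w_1 … w_{2k} and z_0 z_1 … z_{2k} by adding the edges w_i z_i for all i ∈ {0, 1, …, 2k} is a matching covered graph in which every even cycle is conformal. -/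
/-!
Every edge lies in a perfect matching: the rungs form one, and the two side edges over any gap
`j, j + 1` together with all other rungs form another.

For conformality fix a gap `j`. Deleting the two side edges over `j` leaves a bipartite graph,
because the cycles have odd length, so every closed walk has the parity of the number of times it
uses these two edges. An even cycle therefore uses both or neither, hence its vertex set is a
union of rungs, and the rungs outside it match the rest of the graph.
-/

open SimpleGraph

variable {V : Type*}

open Function

namespace SimpleGraph

variable {G : SimpleGraph V}

theorem Walk.even_countP_darts_bne_iff (f : V → Bool) {u v : V} (W : G.Walk u v) :
    Even (W.darts.countP fun d => f d.fst != f d.snd) ↔ f u = f v := by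
  induction W with
  | nil => simp
  | @cons u w v _ p ih =>
    rw [Walk.darts_cons, List.countP_cons, Nat.even_add, ih]
    cases f u <;> cases f w <;> cases f v <;> simp

theorem Subgraph.exists_isMatching_of_involutive {σ : V → V} (hσ : Involutive σ)
    (hadj : ∀ v, G.Adj v (σ v)) {S : Set V} (hS : ∀ v ∈ S, σ v ∈ S) :
    ∃ M : G.Subgraph, M.IsMatching ∧ M.verts = S ∧ ∀ v ∈ S, M.Adj v (σ v) := by
  refine ⟨{ verts := S
            Adj := fun v w => v ∈ S ∧ w = σ v
            adj_sub := fun ⟨_, hw⟩ => hw ▸ hadj _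
            edge_vert := And.left
            symm := ⟨fun v w ⟨hv, hw⟩ => ⟨hw ▸ hS v hv, hw ▸ (hσ v).symm⟩⟩ },
    fun v hv => ⟨σ v, ⟨hv, rfl⟩, fun _ h => h.2⟩, rfl, fun v hv => ⟨hv, rfl⟩⟩

theorem Subgraph.exists_isPerfectMatching_of_involutive {σ : V → V} (hσ : Involutive σ)
    (hadj : ∀ v, G.Adj v (σ v)) : ∃ M : G.Subgraph, M.IsPerfectMatching ∧ ∀ v, M.Adj v (σ v) := by
  obtain ⟨M, hM, hverts, hMσ⟩ :=
    exists_isMatching_of_involutive hσ hadj (S := Set.univ) fun _ _ => Set.mem_univ _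
  exact ⟨M, ⟨hM, fun v => hverts ▸ Set.mem_univ v⟩, fun v => hMσ v (Set.mem_univ v)⟩

end SimpleGraph

theorem List.Nodup.mem_iff_mem_of_even_countP {α : Type*} [DecidableEq α] {l : List α}
    (hl : l.Nodup) {a b : α} (hab : a ≠ b)
    (h : Even (l.countP fun x => x = a ∨ x = b)) : a ∈ l ↔ b ∈ l := by
  have hcount : (l.countP fun x => x = a ∨ x = b) = l.count a + l.count b := by
    clear hl h
    induction l with
    | nil => rfl
    | cons x t ih =>
      simp only [List.countP_cons, List.count_cons, ih]
      grind
  rw [hcount, hl.count, hl.count] at h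
  split_ifs at h <;> simp_all

theorem ZMod.val_add_one_of_ne_neg_one {n : ℕ} {x : ZMod (n + 1)} (hx : x ≠ -1) :
    (x + 1).val = x.val + 1 := by
  have hlast : (-1 : ZMod (n + 1)) = (Fin.last n : Fin (n + 1)) :=
    ZMod.val_injective _ (ZMod.val_neg_one n)
  rw [hlast] at hx
  exact (Fin.val_add_one (n := n) x).trans (if_neg hx)

namespace oddPrism

variable {k : ℕ}

theorem adj_rung (b : Bool) (c : ZMod (2 * k + 1)) : (oddPrism k).Adj (b, c) (!b, c) :=
  Or.inr ⟨by simp, rfl⟩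

theorem adj_succ (b : Bool) {c : ZMod (2 * k + 1)} (hc : c ≠ c + 1) :
    (oddPrism k).Adj (b, c) (b, c + 1) :=
  Or.inl ⟨rfl, hc, Or.inr (add_sub_cancel_left c 1)⟩

def rungMate (v : Bool × ZMod (2 * k + 1)) : Bool × ZMod (2 * k + 1) := (!v.1, v.2)

theorem rungMate_involutive : Involutive (rungMate (k := k)) := fun v => by simp [rungMate]

theorem adj_rungMate (v : Bool × ZMod (2 * k + 1)) : (oddPrism k).Adj v (rungMate v) :=
  adj_rung v.1 v.2

@[elab_as_elim]
theorem adj_induction {P : Bool × ZMod (2 * k + 1) → Bool × ZMod (2 * k + 1) → Prop}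
    (symm : ∀ u v, P u v → P v u) (rung : ∀ b c, P (b, c) (!b, c))
    (side : ∀ b c, c ≠ c + 1 → P (b, c) (b, c + 1))
    {u v : Bool × ZMod (2 * k + 1)} (h : (oddPrism k).Adj u v) : P u v := by
  obtain ⟨a, c⟩ := u
  obtain ⟨b, d⟩ := v
  rcases h with ⟨rfl, hne, hcd | hdc⟩ | ⟨hab, rfl⟩
  · obtain rfl : c = d + 1 := eq_add_of_sub_eq' hcd
    exact symm _ _ (side a d fun h => hne h.symm)
  · obtain rfl : d = c + 1 := eq_add_of_sub_eq' hdc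
    exact side a c hne
  · obtain rfl : b = !a := by cases a <;> cases b <;> simp_all
    exact rung a c

def gapEdge (b : Bool) (j : ZMod (2 * k + 1)) : Sym2 (Bool × ZMod (2 * k + 1)) :=
  s((b, j), (b, j + 1))

theorem side_eq_gapEdge_iff {b : Bool} {c : ZMod (2 * k + 1)} (hc : c ≠ c + 1)
    (j : ZMod (2 * k + 1)) :
    s((b, c), (b, c + 1)) = gapEdge false j ∨ s((b, c), (b, c + 1)) = gapEdge true j ↔ c = j := by
  -- `2 * (k + 1) = 1` in `ZMod (2 * k + 1)`, so the swapped reading `c + 2 = c` forces `1 = 0`.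
  have hn : ((2 * k + 1 : ℕ) : ZMod (2 * k + 1)) = 0 := ZMod.natCast_self _
  push_cast at hn
  have not_swap : ¬(c = j + 1 ∧ c + 1 = j) := by
    rintro ⟨rfl, h⟩
    exact hc (by linear_combination -(k + 1 : ZMod (2 * k + 1)) * h + hn)
  cases b <;> simp [gapEdge, not_swap]

/-- Colour `(b, c)` by `b` plus the parity of `(c - j - 1).val`. Along a side edge this position
grows by one, except over the gap `j`, where it wraps around from `2 * k` to `0`: both even. -/
def gapColoring (j : ZMod (2 * k + 1)) (v : Bool × ZMod (2 * k + 1)) : Bool :=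
  xor v.1 (v.2 - j - 1).val.bodd

theorem gapColoring_eq_iff (j : ZMod (2 * k + 1)) {u v : Bool × ZMod (2 * k + 1)}
    (h : (oddPrism k).Adj u v) :
    gapColoring j u = gapColoring j v ↔ s(u, v) = gapEdge false j ∨ s(u, v) = gapEdge true j := by
  refine adj_induction (fun u v h => ?_) (fun b c => ?_) (fun b c hc => ?_) h
  · rwa [eq_comm, Sym2.eq_swap]
  · cases b <;> simp [gapColoring, gapEdge]
  · rw [side_eq_gapEdge_iff hc, gapColoring, gapColoring,
      show c + 1 - j - 1 = c - j - 1 + 1 by ring]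
    by_cases hx : c - j - 1 = -1
    · have hcj : c = j := by linear_combination hx
      rw [hx, neg_add_cancel, ZMod.val_zero, ZMod.val_neg_one (2 * k)]
      simp [hcj]
    · have hcj : c ≠ j := fun h => hx (by rw [h]; ring)
      rw [ZMod.val_add_one_of_ne_neg_one hx, Nat.bodd_succ]
      simp [hcj]

section Cycle

variable {u : Bool × ZMod (2 * k + 1)} {C : (oddPrism k).Walk u u}

theorem even_countP_edges_gapEdge (hE : Even C.length) (j : ZMod (2 * k + 1)) :
    Even (C.edges.countP fun e => e = gapEdge false j ∨ e = gapEdge true j) := by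
  have hcut := (C.even_countP_darts_bne_iff (gapColoring j)).mpr rfl
  have hrest : (C.darts.countP fun d => gapColoring j d.fst = gapColoring j d.snd) =
      C.edges.countP fun e => e = gapEdge false j ∨ e = gapEdge true j := by
    rw [Walk.edges, List.countP_map]
    refine List.countP_congr fun d _ => ?_
    simp only [Function.comp_apply, decide_eq_true_eq]
    exact gapColoring_eq_iff j d.adj
  rw [← C.length_darts,
    List.length_eq_countP_add_countP fun d => gapColoring j d.fst != gapColoring j d.snd] at hE
  rw [← hrest]
  simpa using (Nat.even_add.mp hE).mp hcut

theorem gapEdge_mem_edges_iff (hC : C.IsCycle) (hE : Even C.length) (b : Bool)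
    (j : ZMod (2 * k + 1)) : gapEdge b j ∈ C.edges ↔ gapEdge (!b) j ∈ C.edges := by
  have h := hC.edges_nodup.mem_iff_mem_of_even_countP (by simp [gapEdge])
    (even_countP_edges_gapEdge hE j)
  cases b
  exacts [h, h.symm]

theorem rungMate_mem_support (hC : C.IsCycle) (hE : Even C.length)
    {v : Bool × ZMod (2 * k + 1)} (hv : v ∈ C.support) : rungMate v ∈ C.support := by
  obtain ⟨e, he, hve⟩ := (Walk.mem_support_iff_exists_mem_edges_of_not_nil hC.not_nil).mp hv
  induction e using Sym2.ind with | _ x y =>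
  have key : s(x, y) ∈ C.edges → rungMate x ∈ C.support ∧ rungMate y ∈ C.support := by
    refine adj_induction (fun x y h hxy => (h (Sym2.eq_swap ▸ hxy)).symm) (fun b c h => ?_)
      (fun b c hc h => ?_) (C.adj_of_mem_edges he)
    · exact ⟨C.snd_mem_support_of_mem_edges h,
        by simpa [rungMate] using C.fst_mem_support_of_mem_edges h⟩
    · have h' := (gapEdge_mem_edges_iff hC hE b c).mp h
      exact ⟨C.fst_mem_support_of_mem_edges h', C.snd_mem_support_of_mem_edges h'⟩
  rcases Sym2.mem_iff.mp hve with rfl | rfl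
  exacts [(key he).1, (key he).2]

theorem conformalCycle_of_even (hC : C.IsCycle) (hE : Even C.length) :
    ConformalCycle (oddPrism k) C := by
  obtain ⟨M, hM, hverts, -⟩ := Subgraph.exists_isMatching_of_involutive rungMate_involutive
    adj_rungMate (S := {w | w ∉ C.support}) fun v hv hmem =>
      hv (rungMate_involutive v ▸ rungMate_mem_support hC hE hmem)
  exact ⟨M, hM, hverts⟩

end Cycle

def gapSwap (i : ZMod (2 * k + 1)) (v : Bool × ZMod (2 * k + 1)) : Bool × ZMod (2 * k + 1) :=
  if v.2 = i then (v.1, i + 1) else if v.2 = i + 1 then (v.1, i) else rungMate v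

theorem gapSwap_involutive {i : ZMod (2 * k + 1)} (hi : i ≠ i + 1) :
    Involutive (gapSwap i) := by
  rintro ⟨b, c⟩
  unfold gapSwap rungMate
  split_ifs <;> simp_all

theorem adj_gapSwap {i : ZMod (2 * k + 1)} (hi : i ≠ i + 1) (v : Bool × ZMod (2 * k + 1)) :
    (oddPrism k).Adj v (gapSwap i v) := by
  obtain ⟨b, c⟩ := v
  unfold gapSwap
  split_ifs with h₁ h₂
  · subst h₁; exact adj_succ b hi
  · subst h₂; exact (adj_succ b hi).symm
  · exact adj_rungMate _

theorem exists_isPerfectMatching_mem_edgeSet {u v : Bool × ZMod (2 * k + 1)}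
    (h : (oddPrism k).Adj u v) :
    ∃ M : (oddPrism k).Subgraph, M.IsPerfectMatching ∧ s(u, v) ∈ M.edgeSet := by
  refine adj_induction (fun u v h => ?_) (fun b c => ?_) (fun b c hc => ?_) h
  · rwa [Sym2.eq_swap]
  · obtain ⟨M, hM, hMσ⟩ :=
      Subgraph.exists_isPerfectMatching_of_involutive rungMate_involutive adj_rungMate
    exact ⟨M, hM, hMσ (b, c)⟩
  · obtain ⟨M, hM, hMσ⟩ :=
      Subgraph.exists_isPerfectMatching_of_involutive (gapSwap_involutive hc) (adj_gapSwap hc)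
    exact ⟨M, hM, by simpa [gapSwap] using hMσ (b, c)⟩

theorem reachable_add_one (b : Bool) (c : ZMod (2 * k + 1)) :
    (oddPrism k).Reachable (b, c) (b, c + 1) := by
  by_cases hc : c = c + 1
  · rw [← hc]
  · exact (adj_succ b hc).reachable

theorem reachable_zero (v : Bool × ZMod (2 * k + 1)) : (oddPrism k).Reachable (v.1, 0) v := by
  obtain ⟨b, c⟩ := v
  rw [← ZMod.natCast_zmod_val c]
  induction c.val with
  | zero => simp
  | succ n ih => exact ih.trans (by simpa using reachable_add_one b (n : ZMod (2 * k + 1)))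

theorem connected : (oddPrism k).Connected := by
  refine (connected_iff_exists_forall_reachable _).mpr ⟨(false, 0), fun v => ?_⟩
  refine Reachable.trans ?_ (reachable_zero v)
  cases v.1
  exacts [Reachable.refl _, (adj_rung false 0).reachable]

end oddPrism

theorem oddPrism_matchingCovered_and_cycleExtendable_general (k : ℕ) :
    MatchingCovered (oddPrism k) ∧ CycleExtendable (oddPrism k) := by
  refine ⟨⟨oddPrism.connected, ⟨(false, 0), (true, 0), by simp⟩, fun e he => ?_⟩,
    fun _ C hC hE => oddPrism.conformalCycle_of_even hC hE⟩
  induction e using Sym2.ind with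
  | _ u v => exact oddPrism.exists_isPerfectMatching_mem_edgeSet he

/-- Every odd prism is cycle-extendable: for every `k ≥ 1`, the odd
prism over two odd cycles of length `2k+1` is a matching covered graph in which every
even cycle is conformal. -/
theorem oddPrism_matchingCovered_and_cycleExtendable (k : ℕ) (hk : 1 ≤ k) :
    MatchingCovered (oddPrism k) ∧ CycleExtendable (oddPrism k) :=
  oddPrism_matchingCovered_and_cycleExtendable_general k
end

section
/- Let G be a graph obtained from a graph H by bisplitting a vertex of degree four or more. If H contains a mixed bicycle, then so does G. -/
open SimpleGraph

variable {V : Type*}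

/-- `G` is obtained from `H` by bisplitting a vertex `v` of degree at least four:
`v` is replaced by two vertices `v₁, v₂`, the edges at `v` are distributed among
`v₁` and `v₂` so that each receives at least two of them, and a new vertex `v₀` is
added together with the edges `v₀v₁` and `v₀v₂`. -/
def BisplitOf {V' : Type*} (G : SimpleGraph V') (H : SimpleGraph V) : Prop :=
  ∃ (v : V) (v₀ v₁ v₂ : V') (f : {w : V // w ≠ v} → V'),
    v₀ ≠ v₁ ∧ v₀ ≠ v₂ ∧ v₁ ≠ v₂ ∧
    Function.Injective f ∧
    (∀ a, f a ≠ v₀ ∧ f a ≠ v₁ ∧ f a ≠ v₂) ∧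
    (∀ x : V', x ≠ v₀ → x ≠ v₁ → x ≠ v₂ → ∃ a, f a = x) ∧
    4 ≤ (H.neighborSet v).ncard ∧
    (∀ a b, G.Adj (f a) (f b) ↔ H.Adj a.1 b.1) ∧
    (∀ a, (G.Adj (f a) v₁ ∨ G.Adj (f a) v₂) ↔ H.Adj a.1 v) ∧
    (∀ a, ¬ (G.Adj (f a) v₁ ∧ G.Adj (f a) v₂)) ∧
    (∀ x : V', G.Adj x v₀ ↔ (x = v₁ ∨ x = v₂)) ∧
    ¬ G.Adj v₁ v₂ ∧
    2 ≤ {x : V' | G.Adj x v₁ ∧ x ≠ v₀}.ncard ∧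
    2 ≤ {x : V' | G.Adj x v₂ ∧ x ≠ v₀}.ncard

/-!
A cycle of `H` avoiding `v` survives unchanged in `G`. A cycle through `v` leaves `v` along two
edges, which in `G` end at `v₁` or `v₂`: if both end at the same `vᵢ` the cycle survives with the
same length, otherwise it is closed up through `v₁ v₀ v₂` and becomes two longer. So parities are
kept and lengths do not drop. Contracting `v₀, v₁, v₂` back to `v` maps each new cycle into the
vertex set of the old one, so disjoint cycles stay disjoint.
-/

namespace SimpleGraph.Walk

variable {G : SimpleGraph V} {u v x y z : V}

lemma IsPath.isCycle_cons_concat {p : G.Walk x y} (hp : p.IsPath) (hxy : x ≠ y)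
    (hz : z ∉ p.support) (hzx : G.Adj z x) (hyz : G.Adj y z) :
    (cons hzx (p.concat hyz)).IsCycle := by
  rw [cons_isCycle_iff, edges_concat, List.concat_eq_append, List.mem_append,
    List.mem_singleton, Sym2.eq_iff]
  refine ⟨hp.concat hz hyz, ?_⟩
  rintro (he | ⟨rfl, -⟩ | ⟨-, rfl⟩)
  · exact hz (p.fst_mem_support_of_mem_edges he)
  · exact hyz.ne rfl
  · exact hxy rfl

lemma IsPath.exists_isCycle_of_adj_ends {S : Set V} {p : G.Walk x y} (hp : p.IsPath)
    (hxy : x ≠ y) (hpS : ∀ w ∈ p.support, w ∉ S) {s t : V} (hs : s ∈ S) (ht : t ∈ S)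
    (hz : z ∈ S) (hzs : G.Adj z s) (hzt : G.Adj z t) (hsx : G.Adj s x) (hyt : G.Adj y t) :
    ∃ (w : V) (c : G.Walk w w), c.IsCycle ∧
      (c.length = p.length + 2 ∨ c.length = p.length + 4) ∧
      ∀ w ∈ c.support, w ∈ S ∨ w ∈ p.support := by
  by_cases hst : s = t
  · subst hst
    refine ⟨s, cons hsx (p.concat hyt), hp.isCycle_cons_concat hxy (hpS s · hs) hsx hyt,
      Or.inl (by simp), fun w hw => ?_⟩
    simp only [support_cons, support_concat, List.mem_cons, List.mem_append, List.not_mem_nil,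
      or_false] at hw
    rcases hw with rfl | hw | rfl <;> tauto
  · have hp' : (cons hsx (p.concat hyt)).IsPath := by
      refine (hp.concat (hpS t · ht) hyt).cons ?_
      simp only [support_concat, List.mem_append, List.mem_singleton, not_or]
      exact ⟨(hpS s · hs), hst⟩
    have hzp' : z ∉ (cons hsx (p.concat hyt)).support := by
      simp only [support_cons, support_concat, List.mem_cons, List.mem_append, List.not_mem_nil,
        or_false, not_or]
      exact ⟨hzs.ne, (hpS z · hz), hzt.ne⟩
    refine ⟨z, cons hzs ((cons hsx (p.concat hyt)).concat hzt.symm),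
      hp'.isCycle_cons_concat hst hzp' hzs hzt.symm, Or.inr (by simp), fun w hw => ?_⟩
    simp only [support_cons, support_concat, List.mem_cons, List.mem_append, List.not_mem_nil,
      or_false] at hw
    rcases hw with rfl | (rfl | hw | rfl) | rfl <;> tauto

lemma IsCycle.exists_isPath_of_mem_support [DecidableEq V] {c : G.Walk u u} (hc : c.IsCycle)
    (hv : v ∈ c.support) :
    ∃ (x y : V) (_ : G.Adj v x) (_ : G.Adj y v) (p : G.Walk x y), p.IsPath ∧ x ≠ y ∧
      v ∉ p.support ∧ p.length + 2 = c.length ∧ ∀ w ∈ p.support, w ∈ c.support := by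
  have hc' := hc.rotate hv
  obtain ⟨x, hvx, p, hp⟩ := not_nil_iff.mp hc'.not_nil
  cases p with
  | nil => exact absurd rfl hvx.ne
  | cons hxw p =>
    obtain ⟨y, q, hyv, hq⟩ := exists_cons_eq_concat hxw p
    rw [hp, hq] at hc'
    obtain ⟨hq', hvq⟩ := (concat_isPath_iff hyv).mp ((cons_isCycle_iff _ _).mp hc').1
    refine ⟨x, y, hvx, hyv, q, hq', ?_, hvq, ?_, fun w hw => ?_⟩
    · rintro rfl
      have := hc'.three_le_length
      simp [length_eq_zero_iff.mpr (isPath_iff_nil.mp hq')] at this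
    · rw [← length_rotate c v hv, hp, hq]
      simp
    · rw [← mem_support_rotate_iff c v hv, hp, hq]
      simp [hw]

lemma length_induce {s : Set V} (p : G.Walk u v) (hp : ∀ x ∈ p.support, x ∈ s) :
    (p.induce s hp).length = p.length := by
  conv_rhs => rw [← p.map_induce hp]
  exact (length_map _ _).symm

lemma isPath_induce_iff {s : Set V} (p : G.Walk u v) (hp : ∀ x ∈ p.support, x ∈ s) :
    (p.induce s hp).IsPath ↔ p.IsPath := by
  conv_rhs => rw [← p.map_induce hp]
  exact (isPath_map_iff_of_injective (Embedding.induce (G := G) s).injective).symm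

lemma isCycle_induce_iff {s : Set V} (p : G.Walk u u) (hp : ∀ x ∈ p.support, x ∈ s) :
    (p.induce s hp).IsCycle ↔ p.IsCycle := by
  conv_rhs => rw [← p.map_induce hp]
  exact (isCycle_map_iff_of_injective (Embedding.induce (G := G) s).injective).symm

end SimpleGraph.Walk

namespace Bisplit

open Walk

-- `f` embeds `H - v` into `G`, and `π` contracts `G` back onto `H`, sending the new vertices to `v`.
variable {V' : Type*} {H : SimpleGraph V} {G : SimpleGraph V'} {v : V} {f : {w // w ≠ v} → V'}
  {π : V' → V}

def inducedHom (hf : ∀ a b, H.Adj a.1 b.1 → G.Adj (f a) (f b)) : H.induce {w | w ≠ v} →g G where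
  toFun := f
  map_rel' := hf _ _

lemma injective_of_comp_eq_val (hπf : ∀ a, π (f a) = a) : Function.Injective f :=
  fun a b h => Subtype.ext (by rw [← hπf a, ← hπf b, h])

lemma mem_support_map_inducedHom (hf : ∀ a b, H.Adj a.1 b.1 → G.Adj (f a) (f b))
    (hπf : ∀ a, π (f a) = a) {a b : V} (p : H.Walk a b) (hp : ∀ x ∈ p.support, x ∈ {w | w ≠ v})
    {y : V'} (hy : y ∈ ((p.induce _ hp).map (inducedHom hf)).support) : π y ∈ p.support := by
  simp only [Walk.support_map, support_induce, List.mem_map, List.mem_attachWith] at hy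
  obtain ⟨a, ha, rfl⟩ := hy
  exact (hπf a).symm ▸ ha

lemma exists_isPath_lift (hf : ∀ a b, H.Adj a.1 b.1 → G.Adj (f a) (f b))
    (hπf : ∀ a, π (f a) = a) {a b : {w // w ≠ v}} {P : H.Walk a b} (hP : P.IsPath)
    (hvP : v ∉ P.support) :
    ∃ R : G.Walk (f a) (f b), R.IsPath ∧ R.length = P.length ∧
      ∀ y ∈ R.support, π y ∈ P.support := by
  have hPv : ∀ x ∈ P.support, x ∈ {w | w ≠ v} := fun x hx h => hvP (h ▸ hx)
  refine ⟨(P.induce _ hPv).map (inducedHom hf), ?_, ?_,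
    fun y => mem_support_map_inducedHom hf hπf P hPv⟩
  · exact ((isPath_induce_iff P hPv).mpr hP).map (injective_of_comp_eq_val hπf)
  · exact (length_map _ _).trans (length_induce P hPv)

lemma exists_isCycle_of_not_mem_support (hf : ∀ a b, H.Adj a.1 b.1 → G.Adj (f a) (f b))
    (hπf : ∀ a, π (f a) = a) {u : V} {Q : H.Walk u u} (hQ : Q.IsCycle) (hvQ : v ∉ Q.support) :
    ∃ (x : V') (C : G.Walk x x), C.IsCycle ∧ C.length = Q.length ∧
      ∀ y ∈ C.support, π y ∈ Q.support := by
  have hQv : ∀ x ∈ Q.support, x ∈ {w | w ≠ v} := fun x hx h => hvQ (h ▸ hx)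
  refine ⟨_, (Q.induce _ hQv).map (inducedHom hf), ?_, ?_,
    fun y => mem_support_map_inducedHom hf hπf Q hQv⟩
  · exact ((isCycle_induce_iff Q hQv).mpr hQ).map (injective_of_comp_eq_val hπf)
  · rw [length_map, length_induce]

lemma exists_isCycle_of_mem_support {v₀ : V'} (hf : ∀ a b, H.Adj a.1 b.1 → G.Adj (f a) (f b))
    (hπf : ∀ a, π (f a) = a) (hπ₀ : π v₀ = v)
    (hv : ∀ a, H.Adj a.1 v → ∃ s, π s = v ∧ G.Adj v₀ s ∧ G.Adj (f a) s)
    {u : V} {Q : H.Walk u u} (hQ : Q.IsCycle) (hvQ : v ∈ Q.support) :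
    ∃ (x : V') (C : G.Walk x x), C.IsCycle ∧
      (C.length = Q.length ∨ C.length = Q.length + 2) ∧ ∀ y ∈ C.support, π y ∈ Q.support := by
  classical
  obtain ⟨x, y, hvx, hyv, P, hP, hxy, hvP, hlen, hPQ⟩ := hQ.exists_isPath_of_mem_support hvQ
  let a : {w // w ≠ v} := ⟨x, hvx.ne'⟩
  let b : {w // w ≠ v} := ⟨y, hyv.ne⟩
  obtain ⟨R, hR, hRlen, hRP⟩ := exists_isPath_lift (a := a) (b := b) hf hπf hP hvP
  have hab : f a ≠ f b := fun h => hxy (by simpa [a, b, hπf] using congrArg π h)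
  have hRv : ∀ w ∈ R.support, w ∉ π ⁻¹' {v} := fun w hw hwv => hvP (hwv ▸ hRP w hw)
  obtain ⟨s, hs, h₀s, has⟩ := hv a hvx.symm
  obtain ⟨t, ht, h₀t, hbt⟩ := hv b hyv
  obtain ⟨z, C, hC, hClen, hCR⟩ :=
    hR.exists_isCycle_of_adj_ends hab hRv hs ht hπ₀ h₀s h₀t has.symm hbt
  refine ⟨z, C, hC, by omega, fun w hw => ?_⟩
  rcases hCR w hw with hwv | hwR
  exacts [(show π w = v from hwv) ▸ hvQ, hPQ _ (hRP w hwR)]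

lemma exists_isCycle_lift {v₀ : V'} (hf : ∀ a b, H.Adj a.1 b.1 → G.Adj (f a) (f b))
    (hπf : ∀ a, π (f a) = a) (hπ₀ : π v₀ = v)
    (hv : ∀ a, H.Adj a.1 v → ∃ s, π s = v ∧ G.Adj v₀ s ∧ G.Adj (f a) s)
    {u : V} {Q : H.Walk u u} (hQ : Q.IsCycle) :
    ∃ (x : V') (C : G.Walk x x), C.IsCycle ∧
      (C.length = Q.length ∨ C.length = Q.length + 2) ∧ ∀ y ∈ C.support, π y ∈ Q.support := by
  by_cases hvQ : v ∈ Q.support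
  · exact exists_isCycle_of_mem_support hf hπf hπ₀ hv hQ hvQ
  · obtain ⟨x, C, hC, hlen, hCQ⟩ := exists_isCycle_of_not_mem_support hf hπf hQ hvQ
    exact ⟨x, C, hC, Or.inl hlen, hCQ⟩

theorem hasMixedBicycle_of_lift {v₀ : V'} (hf : ∀ a b, H.Adj a.1 b.1 → G.Adj (f a) (f b))
    (hπf : ∀ a, π (f a) = a) (hπ₀ : π v₀ = v)
    (hv : ∀ a, H.Adj a.1 v → ∃ s, π s = v ∧ G.Adj v₀ s ∧ G.Adj (f a) s)
    (hH : HasMixedBicycle H) : HasMixedBicycle G := by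
  obtain ⟨_, _, Qo, Qe, hQo, hQe, hodd, heven, hlen, hdisj⟩ := hH
  obtain ⟨_, Co, hCo, hCo_len, hCo_supp⟩ := exists_isCycle_lift hf hπf hπ₀ hv hQo
  obtain ⟨_, Ce, hCe, hCe_len, hCe_supp⟩ := exists_isCycle_lift hf hπf hπ₀ hv hQe
  refine ⟨_, _, Co, Ce, hCo, hCe, ?_, ?_, ?_,
    fun x hxo hxe => hdisj _ (hCo_supp x hxo) (hCe_supp x hxe)⟩
  · rcases hCo_len with h | h <;> rw [h]
    exacts [hodd, hodd.add_even even_two]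
  · rcases hCe_len with h | h <;> rw [h]
    exacts [heven, heven.add even_two]
  · omega

theorem exists_lift_of_bisplitOf (hsplit : BisplitOf G H) :
    ∃ (v : V) (v₀ : V') (f : {w // w ≠ v} → V') (π : V' → V),
      (∀ a b, H.Adj a.1 b.1 → G.Adj (f a) (f b)) ∧ (∀ a, π (f a) = a) ∧ π v₀ = v ∧
      ∀ a, H.Adj a.1 v → ∃ s, π s = v ∧ G.Adj v₀ s ∧ G.Adj (f a) s := by
  obtain ⟨v, v₀, v₁, v₂, f, -, -, -, hf_inj, hf_ne, -, -, hadj, hadj_v, -, hadj_v₀, -, -, -⟩ :=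
    hsplit
  let π : V' → V := Function.extend f Subtype.val (fun _ => v)
  have hπ : ∀ x, x = v₀ ∨ x = v₁ ∨ x = v₂ → π x = v := by
    rintro x hx
    refine Function.extend_apply' _ _ _ ?_
    rintro ⟨a, ha⟩
    rcases hx with rfl | rfl | rfl
    exacts [(hf_ne a).1 ha, (hf_ne a).2.1 ha, (hf_ne a).2.2 ha]
  refine ⟨v, v₀, f, π, fun a b => (hadj a b).mpr, hf_inj.extend_apply _ _, hπ v₀ (by simp),
    fun a ha => ?_⟩
  rcases (hadj_v a).mpr ha with h | h
  exacts [⟨v₁, hπ v₁ (by simp), ((hadj_v₀ v₁).mpr (Or.inl rfl)).symm, h⟩,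
    ⟨v₂, hπ v₂ (by simp), ((hadj_v₀ v₂).mpr (Or.inr rfl)).symm, h⟩]

end Bisplit

open Bisplit

/-- If `G` is obtained from `H` by bisplitting a vertex of degree four
or more and `H` contains a mixed bicycle, then so does `G`. -/
theorem bisplit_preserves_mixedBicycle {V' : Type*} (H : SimpleGraph V)
    (G : SimpleGraph V') (hsplit : BisplitOf G H) (hmb : HasMixedBicycle H) :
    HasMixedBicycle G := by
  obtain ⟨v, v₀, f, π, hf, hπf, hπ₀, hv⟩ := exists_lift_of_bisplitOf hsplit
  exact hasMixedBicycle_of_lift hf hπf hπ₀ hv hmb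
end
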